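/- arXiv:2502.02482 — 10 statements merged into one kernel-verified Lean document; each statement's English description precedes it below -/
import Mathlib

section
/- Let D be a finite digraph whose arcs are each colored blue or red such that the set of blue arcs forms a transitive relation and the set of red arcs forms a transitive relation. Then D has a kernel. -/
/-- In a finite nonempty set, any transitive irreflexive relation has a maximal element. -/
lemma ssw_exists_maximal {V : Type*} (P : V → V → Prop)
    (htrans : ∀ u v w, P u v → P v w → P u w) (hirr : ∀ v, ¬ P v v) :
    ∀ s : Finset V, s.Nonempty → ∃ a ∈ s, ∀ c ∈ s, ¬ P a c := by
  classical
  intro s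
  induction s using Finset.strongInduction with
  | _ s ih =>
    intro hs
    obtain ⟨x, hx⟩ := hs
    by_cases h : ∀ c ∈ s, ¬ P x c
    · exact ⟨x, hx, h⟩
    · push_neg at h
      obtain ⟨y, hy, hxy⟩ := h
      have hsub : s.filter (fun z => P x z) ⊂ s := by
        refine Finset.ssubset_iff_of_subset (Finset.filter_subset _ _) |>.mpr ?_
        exact ⟨x, hx, fun hmem => hirr x (Finset.mem_filter.mp hmem).2⟩
      obtain ⟨a, haC, hamax⟩ := ih _ hsub ⟨y, Finset.mem_filter.mpr ⟨hy, hxy⟩⟩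
      have haX : a ∈ s := (Finset.mem_filter.mp haC).1
      have hxa : P x a := (Finset.mem_filter.mp haC).2
      refine ⟨a, haX, fun c hc hac => ?_⟩
      exact hamax c (Finset.mem_filter.mpr ⟨hc, htrans _ _ _ hxa hac⟩) hac

/-- Sands–Sauer–Woodrow.
A finite digraph whose arcs are colored blue (`b`) or red (`r`) — no loops,
each arc having exactly one color — such that each color class is a transitive
relation, has a kernel (an independent and absorbing set of vertices). -/
theorem stmt1 {V : Type*} [Fintype V] (b r : V → V → Prop)
    (hb_loop : ∀ v, ¬ b v v) (hr_loop : ∀ v, ¬ r v v)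
    (hdisj : ∀ u v, ¬ (b u v ∧ r u v))
    (hb_trans : ∀ u v w, b u v → b v w → b u w)
    (hr_trans : ∀ u v w, r u v → r v w → r u w) :
    ∃ S : Set V,
      (∀ u ∈ S, ∀ v ∈ S, u ≠ v → ¬ (b u v ∨ r u v)) ∧
      (∀ v ∉ S, ∃ s ∈ S, b v s ∨ r v s) := by
  classical
  -- the one-step operator
  set Psi : Finset V → Finset V :=
    fun X => Finset.univ.filter
      (fun v => ¬ ∃ s, (s ∈ X ∧ ∀ y ∈ X, ¬ b s y) ∧ r v s) with hPsi
  have memPsi : ∀ (X : Finset V) (v : V),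
      v ∈ Psi X ↔ ¬ ∃ s, (s ∈ X ∧ ∀ y ∈ X, ¬ b s y) ∧ r v s := by
    intro X v
    simp [hPsi]
  -- key: Psi preserves "pre-fixed points"
  have key : ∀ X : Finset V, Psi X ⊆ X → Psi (Psi X) ⊆ Psi X := by
    intro X hXsub v hv
    by_contra hvY
    have hvs : ∃ s, (s ∈ X ∧ ∀ y ∈ X, ¬ b s y) ∧ r v s := by
      by_contra h
      exact hvY ((memPsi X v).mpr h)
    obtain ⟨s, ⟨hsX, hsmax⟩, hrvs⟩ := hvs
    set C := X.filter (fun t => (∀ y ∈ X, ¬ b t y) ∧ (t = s ∨ r s t)) with hC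
    have hsC : s ∈ C := Finset.mem_filter.mpr ⟨hsX, hsmax, Or.inl rfl⟩
    obtain ⟨s', hs'C, hs'max⟩ :=
      ssw_exists_maximal r hr_trans hr_loop C ⟨s, hsC⟩
    have hs'X : s' ∈ X := (Finset.mem_filter.mp hs'C).1
    have hs'bmax : ∀ y ∈ X, ¬ b s' y := (Finset.mem_filter.mp hs'C).2.1
    have hs'alt : s' = s ∨ r s s' := (Finset.mem_filter.mp hs'C).2.2
    -- s' is in Psi X
    have hs'Y : s' ∈ Psi X := by
      rw [memPsi]
      rintro ⟨t, ⟨htX, htmax⟩, hrs't⟩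
      have htC : t ∈ C := by
        refine Finset.mem_filter.mpr ⟨htX, htmax, Or.inr ?_⟩
        rcases hs'alt with h | h
        · rw [← h]; exact hrs't
        · exact hr_trans _ _ _ h hrs't
      exact hs'max t htC hrs't
    -- s' is b-maximal in Psi X
    have hs'maxY : ∀ y ∈ Psi X, ¬ b s' y := fun y hy => hs'bmax y (hXsub hy)
    -- r v s'
    have hrvs' : r v s' := by
      rcases hs'alt with h | h
      · rw [h]; exact hrvs
      · exact hr_trans _ _ _ hrvs h
    exact (memPsi (Psi X) v).mp hv ⟨s', ⟨hs'Y, hs'maxY⟩, hrvs'⟩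
  -- find a fixed point: minimal-cardinality pre-fixed point
  have hne : (Finset.univ.filter (fun X : Finset V => Psi X ⊆ X)).Nonempty :=
    ⟨Finset.univ, Finset.mem_filter.mpr ⟨Finset.mem_univ _, Finset.subset_univ _⟩⟩
  obtain ⟨X, hXmem, hXmin⟩ :=
    Finset.exists_min_image _ (fun X : Finset V => X.card) hne
  have hXsub : Psi X ⊆ X := (Finset.mem_filter.mp hXmem).2
  have hPsiXmem : Psi X ∈ Finset.univ.filter (fun X : Finset V => Psi X ⊆ X) :=
    Finset.mem_filter.mpr ⟨Finset.mem_univ _, key X hXsub⟩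
  have hcard : X.card ≤ (Psi X).card := hXmin _ hPsiXmem
  have hfix : Psi X = X := Finset.eq_of_subset_of_card_le hXsub hcard
  -- the kernel
  refine ⟨{x | x ∈ X ∧ ∀ y ∈ X, ¬ b x y}, ?_, ?_⟩
  · -- independence
    rintro u ⟨huX, humax⟩ v ⟨hvX, hvmax⟩ huv harc
    rcases harc with h | h
    · exact humax v hvX h
    · have huPsi : u ∈ Psi X := by rw [hfix]; exact huX
      exact (memPsi X u).mp huPsi ⟨v, ⟨hvX, hvmax⟩, h⟩
  · -- absorption
    intro v hv
    by_cases hvX : v ∈ X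
    · -- v in X but not b-maximal in X
      have : ¬ ∀ y ∈ X, ¬ b v y := fun h => hv ⟨hvX, h⟩
      push_neg at this
      obtain ⟨y, hyX, hbvy⟩ := this
      set C := X.filter (fun t => b v t) with hC
      obtain ⟨y', hy'C, hy'max⟩ :=
        ssw_exists_maximal b hb_trans hb_loop C ⟨y, Finset.mem_filter.mpr ⟨hyX, hbvy⟩⟩
      have hy'X : y' ∈ X := (Finset.mem_filter.mp hy'C).1
      have hbvy' : b v y' := (Finset.mem_filter.mp hy'C).2
      refine ⟨y', ⟨hy'X, fun z hzX hbz => ?_⟩, Or.inl hbvy'⟩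
      exact hy'max z (Finset.mem_filter.mpr ⟨hzX, hb_trans _ _ _ hbvy' hbz⟩) hbz
    · -- v outside X: it is r-absorbed by a b-maximal element of X
      have hvPsi : v ∉ Psi X := by rw [hfix]; exact hvX
      have : ∃ s, (s ∈ X ∧ ∀ y ∈ X, ¬ b s y) ∧ r v s := by
        by_contra h
        exact hvPsi ((memPsi X v).mpr h)
      obtain ⟨s, ⟨hsX, hsmax⟩, hrvs⟩ := this
      exact ⟨s, ⟨hsX, hsmax⟩, Or.inr hrvs⟩
end

section
/- Every M-clique-acyclic orientation of a finite comparability graph has a kernel; that is, every finite comparability graph is kernel-M-solvable. -/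
/-- Minimal element of a nonempty finite set with respect to a transitive
irreflexive relation. -/
lemma exists_min_of_transitive {V : Type*} (lt : V → V → Prop) (htrans : Transitive lt)
    (hirr : ∀ u, ¬ lt u u) (U : Finset V) (hne : U.Nonempty) :
    ∃ v ∈ U, ∀ z ∈ U, ¬ lt z v := by
  classical
  induction U using Finset.strongInduction with
  | _ U ih =>
    obtain ⟨v₀, hv₀⟩ := hne
    by_cases h : ∃ z ∈ U, lt z v₀
    · obtain ⟨z₀, hz₀U, hz₀⟩ := h
      have hU' : U.filter (fun z => lt z v₀) ⊂ U := by
        refine ⟨Finset.filter_subset _ _, fun hc => ?_⟩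
        have : v₀ ∈ U.filter (fun z => lt z v₀) := hc hv₀
        exact hirr v₀ (Finset.mem_filter.mp this).2
      obtain ⟨v, hvU', hvmin⟩ := ih _ hU' ⟨z₀, Finset.mem_filter.mpr ⟨hz₀U, hz₀⟩⟩
      refine ⟨v, (Finset.mem_filter.mp hvU').1, fun z hz hzv => ?_⟩
      have hvv₀ : lt v v₀ := (Finset.mem_filter.mp hvU').2
      exact hvmin z (Finset.mem_filter.mpr ⟨hz, htrans hzv hvv₀⟩) hzv
    · push_neg at h
      exact ⟨v₀, hv₀, h⟩

/-- Champetier's theorem.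
Every finite comparability graph is kernel-`M`-solvable: if `G` is a finite
undirected graph admitting a transitive orientation `lt` (each edge oriented in
exactly one direction so that the resulting relation is transitive), and `D` is
an `M`-clique-acyclic orientation of `G` (every edge receives at least one of
its two directions, no arcs between non-adjacent vertices, and every directed
triangle has at least two reversible arcs), then `D` has a kernel. -/
theorem stmt2 {V : Type*} [Fintype V] (G : SimpleGraph V)
    (hcomp : ∃ lt : V → V → Prop, Transitive lt ∧
      (∀ u v, lt u v → G.Adj u v) ∧
      (∀ u v, G.Adj u v → lt u v ∨ lt v u) ∧
      (∀ u v, ¬ (lt u v ∧ lt v u)))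
    (D : V → V → Prop)
    (horient₁ : ∀ u v, D u v → G.Adj u v)
    (horient₂ : ∀ u v, G.Adj u v → D u v ∨ D v u)
    (hM : ∀ u v w, D u v → D v w → D w u →
      (D v u ∧ D w v) ∨ (D w v ∧ D u w) ∨ (D v u ∧ D u w)) :
    ∃ S : Set V,
      (∀ u ∈ S, ∀ v ∈ S, u ≠ v → ¬ D u v) ∧
      (∀ v ∉ S, ∃ s ∈ S, D v s) := by
  classical
  obtain ⟨lt, htrans, hlt_adj, hadj_lt, hnot⟩ := hcomp
  have hirr : ∀ u, ¬ lt u u := fun u h => hnot u u ⟨h, h⟩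
  -- Key lemma from M-clique-acyclicity
  have lemA : ∀ z c v, D z c → D c v → ¬ D v c → G.Adj z v → D z v := by
    intro z c v h1 h2 h3 hadj
    by_contra hzv
    have hvz : D v z := (horient₂ z v hadj).resolve_left hzv
    rcases hM v z c hvz h1 h2 with ⟨h, _⟩ | ⟨_, h⟩ | ⟨h, _⟩
    · exact hzv h
    · exact h3 h
    · exact hzv h
  -- the "down-closure" of a finset
  let dn : Finset V → Finset V := fun A =>
    Finset.univ.filter (fun x => x ∈ A ∨ ∃ a ∈ A, lt x a)
  -- main induction
  have main : ∀ (k : ℕ) (A : Finset V),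
      (∀ a ∈ A, ∀ b ∈ A, a ≠ b → ¬ D a b) →
      (∀ a ∈ A, ∀ z, lt z a → z ∈ A ∨ ∃ c ∈ A, D z c) →
      Fintype.card V ≤ k + (dn A).card →
      ∃ S : Finset V, (∀ u ∈ S, ∀ v ∈ S, u ≠ v → ¬ D u v) ∧
        (∀ v, v ∉ S → ∃ s ∈ S, D v s) := by
    intro k
    induction k with
    | zero =>
      intro A hI hB hcard
      -- dn A = univ, hence every vertex outside A is absorbed
      have hdn : dn A = Finset.univ := by
        apply Finset.eq_univ_of_card
        exact le_antisymm (Finset.card_le_univ _) (by simpa using hcard)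
      refine ⟨A, hI, fun v hv => ?_⟩
      have hvdn : v ∈ dn A := hdn ▸ Finset.mem_univ v
      rcases (Finset.mem_filter.mp hvdn).2 with hvA | ⟨a, haA, hva⟩
      · exact absurd hvA hv
      · rcases hB a haA v hva with hvA | habs
        · exact absurd hvA hv
        · exact habs
    | succ k ih =>
      intro A hI hB hcard
      by_cases hU : ∃ v, v ∉ A ∧ ¬ ∃ c ∈ A, D v c
      · -- pick a lt-minimal unabsorbed vertex v
        set U : Finset V :=
          Finset.univ.filter (fun v => v ∉ A ∧ ¬ ∃ c ∈ A, D v c) with hUdef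
        have hUne : U.Nonempty := by
          obtain ⟨v, hv⟩ := hU
          exact ⟨v, Finset.mem_filter.mpr ⟨Finset.mem_univ v, hv⟩⟩
        obtain ⟨v, hvU, hvmin⟩ := exists_min_of_transitive lt htrans hirr U hUne
        obtain ⟨hvA, hvabs⟩ := (Finset.mem_filter.mp hvU).2
        -- settled vertices: in A or absorbed
        have hsettled : ∀ z, lt z v → z ∈ A ∨ ∃ c ∈ A, D z c := by
          intro z hzv
          by_contra hc
          push_neg at hc
          exact hvmin z (Finset.mem_filter.mpr
            ⟨Finset.mem_univ z, hc.1, fun ⟨c, hcA, hzc⟩ => hc.2 c hcA hzc⟩) hzv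
        set E : Finset V := A.filter (fun a => G.Adj a v) with hEdef
        have hEA : ∀ a ∈ E, a ∈ A := fun a ha => (Finset.mem_filter.mp ha).1
        have f1 : ∀ a ∈ E, D a v ∧ ¬ D v a := by
          intro a ha
          have haA := hEA a ha
          have hadj : G.Adj a v := (Finset.mem_filter.mp ha).2
          have hnv : ¬ D v a := fun hd => hvabs ⟨a, haA, hd⟩
          exact ⟨(horient₂ a v hadj).resolve_right hnv, hnv⟩
        have f2 : ∀ a ∈ E, lt a v := by
          intro a ha
          have haA := hEA a ha
          have hadj : G.Adj a v := (Finset.mem_filter.mp ha).2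
          rcases hadj_lt a v hadj with h | h
          · exact h
          · rcases hB a haA v h with hvA' | habs
            · exact absurd hvA' hvA
            · exact absurd habs hvabs
        -- the new set
        set A' : Finset V := insert v (A \ E) with hA'def
        have hmemA' : ∀ x, x ∈ A' ↔ x = v ∨ (x ∈ A ∧ x ∉ E) := by
          intro x
          simp [hA'def, Finset.mem_insert, Finset.mem_sdiff]
        -- a vertex of A adjacent to v is in E
        have hadjE : ∀ a ∈ A, G.Adj a v → a ∈ E := by
          intro a haA hadj
          exact Finset.mem_filter.mpr ⟨haA, hadj⟩
        -- independence of A'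
        have hI' : ∀ a ∈ A', ∀ b ∈ A', a ≠ b → ¬ D a b := by
          intro a ha b hb hne hD
          rcases (hmemA' a).mp ha with rfl | ⟨haA, haE⟩
          · rcases (hmemA' b).mp hb with rfl | ⟨hbA, hbE⟩
            · exact hne rfl
            · exact hbE (hadjE b hbA ((horient₁ a b hD).symm))
          · rcases (hmemA' b).mp hb with rfl | ⟨hbA, hbE⟩
            · exact haE (hadjE a haA (horient₁ a b hD))
            · exact hI a haA b hbA hne hD
        -- helper: a settled vertex below v is settled for A'
        have hH1 : ∀ z, (z ∈ A ∨ ∃ c ∈ A, D z c) → lt z v →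
            z ∈ A' ∨ ∃ c ∈ A', D z c := by
          intro z hz hzv
          rcases hz with hzA | ⟨c, hcA, hzc⟩
          · by_cases hzE : z ∈ E
            · exact Or.inr ⟨v, (hmemA' v).mpr (Or.inl rfl), (f1 z hzE).1⟩
            · exact Or.inl ((hmemA' z).mpr (Or.inr ⟨hzA, hzE⟩))
          · by_cases hcE : c ∈ E
            · have hDzv : D z v :=
                lemA z c v hzc (f1 c hcE).1 (f1 c hcE).2 (hlt_adj z v hzv)
              exact Or.inr ⟨v, (hmemA' v).mpr (Or.inl rfl), hDzv⟩
            · exact Or.inr ⟨c, (hmemA' c).mpr (Or.inr ⟨hcA, hcE⟩), hzc⟩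
        -- invariant (B) for A'
        have hB' : ∀ a ∈ A', ∀ z, lt z a → z ∈ A' ∨ ∃ c ∈ A', D z c := by
          intro a ha z hza
          rcases (hmemA' a).mp ha with rfl | ⟨haA, haE⟩
          · exact hH1 z (hsettled z hza) hza
          · rcases hB a haA z hza with hzA | ⟨c, hcA, hzc⟩
            · by_cases hzE : z ∈ E
              · exact Or.inr ⟨v, (hmemA' v).mpr (Or.inl rfl), (f1 z hzE).1⟩
              · exact Or.inl ((hmemA' z).mpr (Or.inr ⟨hzA, hzE⟩))
            · by_cases hcE : c ∈ E
              · -- show lt z c, then conclude via lemA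
                have hzc_adj : G.Adj z c := horient₁ z c hzc
                have hltzc : lt z c := by
                  rcases hadj_lt z c hzc_adj with h | h
                  · exact h
                  · -- lt c z gives lt c a, contradicting independence of A
                    exfalso
                    have hca : lt c a := htrans h hza
                    have hcadj : G.Adj c a := hlt_adj c a hca
                    have hcne : c ≠ a := fun hciseq => haE (hciseq ▸ hcE)
                    rcases horient₂ c a hcadj with hD | hD
                    · exact hI c (hEA c hcE) a haA hcne hD
                    · exact hI a haA c (hEA c hcE) hcne.symm hD
                have hzv : lt z v := htrans hltzc (f2 c hcE)
                have hDzv : D z v :=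
                  lemA z c v hzc (f1 c hcE).1 (f1 c hcE).2 (hlt_adj z v hzv)
                exact Or.inr ⟨v, (hmemA' v).mpr (Or.inl rfl), hDzv⟩
              · exact Or.inr ⟨c, (hmemA' c).mpr (Or.inr ⟨hcA, hcE⟩), hzc⟩
        -- the down-closure grows strictly
        have hmono : dn A ⊆ dn A' := by
          intro x hx
          have hx' := (Finset.mem_filter.mp hx).2
          apply Finset.mem_filter.mpr
          refine ⟨Finset.mem_univ x, ?_⟩
          rcases hx' with hxA | ⟨a, haA, hxa⟩
          · by_cases hxE : x ∈ E
            · exact Or.inr ⟨v, (hmemA' v).mpr (Or.inl rfl), f2 x hxE⟩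
            · exact Or.inl ((hmemA' x).mpr (Or.inr ⟨hxA, hxE⟩))
          · by_cases haE : a ∈ E
            · exact Or.inr ⟨v, (hmemA' v).mpr (Or.inl rfl), htrans hxa (f2 a haE)⟩
            · exact Or.inr ⟨a, (hmemA' a).mpr (Or.inr ⟨haA, haE⟩), hxa⟩
        have hvnew : v ∈ dn A' ∧ v ∉ dn A := by
          constructor
          · exact Finset.mem_filter.mpr
              ⟨Finset.mem_univ v, Or.inl ((hmemA' v).mpr (Or.inl rfl))⟩
          · intro hvdn
            rcases (Finset.mem_filter.mp hvdn).2 with hvA' | ⟨a, haA, hva⟩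
            · exact hvA hvA'
            · rcases hB a haA v hva with h | h
              · exact hvA h
              · exact hvabs h
        have hcardlt : (dn A).card < (dn A').card :=
          Finset.card_lt_card ⟨hmono, fun hc => hvnew.2 (hc hvnew.1)⟩
        exact ih A' hI' hB' (by omega)
      · push_neg at hU
        refine ⟨A, hI, fun v hv => ?_⟩
        obtain ⟨c, hcA, hvc⟩ := hU v hv
        exact ⟨c, hcA, hvc⟩
  obtain ⟨S, hS1, hS2⟩ := main (Fintype.card V) ∅
    (by intro a ha; exact absurd ha (Finset.notMem_empty a))
    (by intro a ha; exact absurd ha (Finset.notMem_empty a))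
    (Nat.le_add_right _ _)
  refine ⟨(↑S : Set V), ?_, ?_⟩
  · intro u hu v hv hne
    exact hS1 u hu v hv hne
  · intro v hv
    obtain ⟨s, hsS, hvs⟩ := hS2 v hv
    exact ⟨s, hsS, hvs⟩
end

section
/- For every odd integer n ≥ 9, the anti-hole on n vertices (the complement of the cycle C_n) is simple kernel-solvable: every simple clique-acyclic orientation of it has a kernel. -/
/-- first half of Proposition 3 of the paper.
For every odd `n ≥ 9`, the anti-hole on `n` vertices (the complement of the `n`-cycle,
with vertex set `ZMod n`, where `i` and `j` are adjacent iff `i ≠ j` and they are not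
consecutive modulo `n`) is simple kernel-solvable: every simple clique-acyclic
orientation `D` of it (each edge oriented in exactly one direction, no arcs between
non-adjacent vertices, and every nonempty clique has a vertex receiving an arc from
every other vertex of the clique) has a kernel. -/
theorem stmt6 (n : ℕ) (hn : Odd n) (h9 : 9 ≤ n)
    (D : ZMod n → ZMod n → Prop)
    (hsub : ∀ i j, D i j → i ≠ j ∧ j ≠ i + 1 ∧ i ≠ j + 1)
    (hcover : ∀ i j : ZMod n, i ≠ j → j ≠ i + 1 → i ≠ j + 1 → D i j ∨ D j i)
    (hsimple : ∀ i j, ¬ (D i j ∧ D j i))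
    (hca : ∀ K : Finset (ZMod n), K.Nonempty →
      (∀ u ∈ K, ∀ v ∈ K, u ≠ v → D u v ∨ D v u) →
      ∃ v ∈ K, ∀ u ∈ K, u ≠ v → D u v) :
    ∃ S : Set (ZMod n),
      (∀ u ∈ S, ∀ v ∈ S, u ≠ v → ¬ D u v) ∧
      (∀ v ∉ S, ∃ s ∈ S, D v s) := by
  classical
  haveI : NeZero n := ⟨by omega⟩
  obtain ⟨r, hrr⟩ := hn
  have hr : n = 2 * r + 1 := by omega
  -- cast helpers
  have hcast : ∀ a b : ℕ, a < n → b < n → ((a : ZMod n) = (b : ZMod n)) → a = b := by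
    intro a b ha hb h
    have h1 : (ZMod.val ((a : ZMod n))) = a := ZMod.val_cast_of_lt ha
    have h2 : (ZMod.val ((b : ZMod n))) = b := ZMod.val_cast_of_lt hb
    rw [← h1, ← h2, h]
  have hne1 : (1 : ZMod n) ≠ 0 := by
    intro h
    have := hcast 1 0 (by omega) (by omega) (by exact_mod_cast h)
    omega
  have hne2 : (2 : ZMod n) ≠ 0 := by
    intro h
    have := hcast 2 0 (by omega) (by omega) (by exact_mod_cast h)
    omega
  have hne3 : (3 : ZMod n) ≠ 0 := by
    intro h
    have := hcast 3 0 (by omega) (by omega) (by exact_mod_cast h)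
    omega
  have hne4 : (4 : ZMod n) ≠ 0 := by
    intro h
    have := hcast 4 0 (by omega) (by omega) (by exact_mod_cast h)
    omega
  -- no directed triangle
  have hnc : ∀ a b c : ZMod n, D a b → D b c → D c a → False := by
    intro a b c hab hbc hca'
    have h1 := (hsub a b hab).1
    have h2 := (hsub b c hbc).1
    have h3 := (hsub c a hca').1
    obtain ⟨s, hs, hall⟩ := hca {a, b, c} ⟨a, by simp⟩ (by
      intro u hu w hw huw
      simp only [Finset.mem_insert, Finset.mem_singleton] at hu hw
      rcases hu with rfl | rfl | rfl <;> rcases hw with rfl | rfl | rfl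
      · exact absurd rfl huw
      · exact Or.inl hab
      · exact Or.inr hca'
      · exact Or.inr hab
      · exact absurd rfl huw
      · exact Or.inl hbc
      · exact Or.inl hca'
      · exact Or.inr hbc
      · exact absurd rfl huw)
    simp only [Finset.mem_insert, Finset.mem_singleton] at hs
    rcases hs with rfl | rfl | rfl
    · have := hall b (by simp) (Ne.symm h1)
      exact hsimple s b ⟨hab, this⟩
    · have := hall c (by simp) (Ne.symm h2)
      exact hsimple s c ⟨hbc, this⟩
    · have := hall a (by simp) (Ne.symm h3)
      exact hsimple s a ⟨hca', this⟩
  -- transitivity on cliques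
  have htr : ∀ a b c : ZMod n, D a b → D b c → a ≠ c → c ≠ a + 1 → a ≠ c + 1 → D a c := by
    intro a b c hab hbc h1 h2 h3
    rcases hcover a c h1 h2 h3 with h | h
    · exact h
    · exact absurd (hnc a b c hab hbc h) (fun f => f)
  -- abstract "all signs equal" contradiction
  have chainF : ∀ E : ZMod n → ZMod n → Prop,
      (∀ a b c, E a b → E b c → a ≠ c → c ≠ a + 1 → a ≠ c + 1 → E a c) →
      (∀ a b c, E a b → E b c → E c a → False) →
      (∀ j : ZMod n, E j (j + 2)) → False := by
    intro E hEtr hE3 hall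
    have hch : ∀ m : ℕ, 1 ≤ m → 2 * m + 3 ≤ n → ∀ i : ZMod n,
        E i (i + ((2 * m : ℕ) : ZMod n)) := by
      intro m
      induction m with
      | zero => exact fun h => absurd h (by omega)
      | succ m ih =>
        intro h1 h2 i
        by_cases hm : m = 0
        · subst hm
          have hcc : ((2 * (0 + 1) : ℕ) : ZMod n) = 2 := by norm_num
          rw [hcc]
          exact hall i
        · have ihm := ih (by omega) (by omega) i
          have h2' := hall (i + ((2 * m : ℕ) : ZMod n))
          have hkey : i + ((2 * m : ℕ) : ZMod n) + 2 = i + ((2 * (m + 1) : ℕ) : ZMod n) := by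
            push_cast
            ring
          rw [hkey] at h2'
          refine hEtr i (i + ((2 * m : ℕ) : ZMod n)) (i + ((2 * (m + 1) : ℕ) : ZMod n))
            ihm h2' ?_ ?_ ?_
          · intro h
            push_cast at h
            have h0 : ((2 * m + 2 : ℕ) : ZMod n) = ((0 : ℕ) : ZMod n) := by
              push_cast
              linear_combination -h
            have := hcast (2 * m + 2) 0 (by omega) (by omega) h0
            omega
          · intro h
            push_cast at h
            have h0 : ((2 * m + 2 : ℕ) : ZMod n) = ((1 : ℕ) : ZMod n) := by
              push_cast
              linear_combination h
            have := hcast (2 * m + 2) 1 (by omega) (by omega) h0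
            omega
          · intro h
            push_cast at h
            have h0 : ((2 * m + 3 : ℕ) : ZMod n) = ((0 : ℕ) : ZMod n) := by
              push_cast
              linear_combination -h
            have := hcast (2 * m + 3) 0 (by omega) (by omega) h0
            omega
    have hrel : 2 * (r : ZMod n) + 1 = 0 := by
      have hz : ((2 * r + 1 : ℕ) : ZMod n) = 0 := by
        rw [show 2 * r + 1 = n from hr.symm]
        exact ZMod.natCast_self n
      push_cast at hz
      linear_combination hz
    have hcsub : ((2 * (r - 1) : ℕ) : ZMod n) = 2 * (r : ZMod n) - 2 := by
      push_cast [Nat.cast_sub (show 1 ≤ r by omega)]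
      ring
    have e06 : E 0 (6 : ZMod n) := by
      have h := hch 3 (by omega) (by omega) 0
      have h6 : (0 : ZMod n) + ((2 * 3 : ℕ) : ZMod n) = 6 := by
        norm_num
      rwa [h6] at h
    have e30 : E 3 0 := by
      have h := hch (r - 1) (by omega) (by omega) 3
      have h30 : (3 : ZMod n) + ((2 * (r - 1) : ℕ) : ZMod n) = 0 := by
        rw [hcsub]
        linear_combination hrel
      rwa [h30] at h
    have e63 : E 6 3 := by
      have h := hch (r - 1) (by omega) (by omega) 6
      have h63 : (6 : ZMod n) + ((2 * (r - 1) : ℕ) : ZMod n) = 3 := by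
        rw [hcsub]
        linear_combination hrel
      rwa [h63] at h
    exact hE3 0 6 3 e06 e63 e30
  -- blocker sets
  set Bl : ZMod n → Finset (ZMod n) := fun i => Finset.univ.filter
    (fun v => (v = i + 2 ∧ D i (i + 2)) ∨ (v = i - 1 ∧ D (i + 1) (i - 1)) ∨
      (D i v ∧ D (i + 1) v)) with hBldef
  have hBlmem : ∀ i v : ZMod n, v ∈ Bl i ↔
      ((v = i + 2 ∧ D i (i + 2)) ∨ (v = i - 1 ∧ D (i + 1) (i - 1)) ∨
        (D i v ∧ D (i + 1) v)) := by
    intro i v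
    rw [hBldef]
    simp only [Finset.mem_filter, Finset.mem_univ, true_and]
  by_contra hk
  push_neg at hk
  -- every pair is blocked
  have hBne : ∀ i : ZMod n, (Bl i).Nonempty := by
    intro i
    rw [Finset.nonempty_iff_ne_empty]
    intro hemp
    have hnob : ∀ v, v ∉ Bl i := by
      intro v hv
      rw [hemp] at hv
      exact absurd hv (Finset.notMem_empty v)
    obtain ⟨v, hvS, hvarc⟩ := hk {i, i + 1} (by
      intro u hu w hw huw hD
      simp only [Set.mem_insert_iff, Set.mem_singleton_iff] at hu hw
      rcases hu with rfl | rfl <;> rcases hw with rfl | rfl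
      · exact huw rfl
      · exact (hsub _ _ hD).2.1 rfl
      · exact (hsub _ _ hD).2.2 rfl
      · exact huw rfl)
    simp only [Set.mem_insert_iff, Set.mem_singleton_iff, not_or] at hvS
    obtain ⟨hvi, hvi1⟩ := hvS
    have hnvi : ¬ D v i := hvarc i (by simp)
    have hnvi1 : ¬ D v (i + 1) := hvarc (i + 1) (by simp)
    by_cases hv1 : v = i - 1
    · rcases hcover (i - 1) (i + 1)
        (fun h => hne2 (by linear_combination -h))
        (fun h => hne1 (by linear_combination h))
        (fun h => hne3 (by linear_combination -h)) with h | h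
      · exact hnvi1 (by rwa [hv1])
      · exact hnob (i - 1) ((hBlmem i (i - 1)).mpr (Or.inr (Or.inl ⟨rfl, h⟩)))
    by_cases hv2 : v = i + 2
    · rcases hcover i (i + 2)
        (fun h => hne2 (by linear_combination -h))
        (fun h => hne1 (by linear_combination h))
        (fun h => hne3 (by linear_combination -h)) with h | h
      · exact hnob (i + 2) ((hBlmem i (i + 2)).mpr (Or.inl ⟨rfl, h⟩))
      · exact hnvi (by rwa [hv2])
    · have hDiv : D i v := by
        rcases hcover v i hvi (fun h => hv1 (by linear_combination -h)) hvi1 with h | h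
        · exact absurd h hnvi
        · exact h
      have hDi1v : D (i + 1) v := by
        rcases hcover v (i + 1) hvi1 (fun h => hvi (by linear_combination -h))
          (fun h => hv2 (by linear_combination h)) with h | h
        · exact absurd h hnvi1
        · exact h
      exact hnob v ((hBlmem i v).mpr (Or.inr (Or.inr ⟨hDiv, hDi1v⟩)))
  -- minimizer
  obtain ⟨i, -, hminx⟩ := Finset.exists_min_image (Finset.univ : Finset (ZMod n))
    (fun x => (Bl x).card) ⟨0, Finset.mem_univ 0⟩
  have hmin : ∀ x : ZMod n, (Bl i).card ≤ (Bl x).card := fun x => hminx x (Finset.mem_univ x)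
  -- generic-blocker contradiction
  have gcase : ∀ j v : ZMod n, (∀ x, (Bl j).card ≤ (Bl x).card) →
      D j v → D (j + 1) v → False := by
    intro j v hminj hjv hj1v
    obtain ⟨hjv1, hjv2, hjv3⟩ := hsub j v hjv
    obtain ⟨hj1v1, hj1v2, hj1v3⟩ := hsub (j + 1) v hj1v
    have hvmem : v ∈ Bl j := (hBlmem j v).mpr (Or.inr (Or.inr ⟨hjv, hj1v⟩))
    have subA : ∀ w, D v w → w ∈ Bl j ∧ w ≠ v := by
      intro w hvw
      obtain ⟨hvw1, hvw2, hvw3⟩ := hsub v w hvw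
      refine ⟨?_, Ne.symm hvw1⟩
      by_cases hwj : w = j
      · exact absurd ⟨hjv, by rwa [hwj] at hvw⟩ (hsimple j v)
      by_cases hwj1 : w = j + 1
      · exact absurd ⟨hj1v, by rwa [hwj1] at hvw⟩ (hsimple (j + 1) v)
      by_cases hwm : w = j - 1
      · have hDx : D (j + 1) w := htr (j + 1) v w hj1v hvw
          (by rw [hwm]; intro h; exact hne2 (by linear_combination h))
          (by rw [hwm]; intro h; exact hne3 (by linear_combination -h))
          (by rw [hwm]; intro h; exact hne1 (by linear_combination h))
        refine (hBlmem j w).mpr (Or.inr (Or.inl ⟨hwm, ?_⟩))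
        rw [← hwm]
        exact hDx
      by_cases hwp : w = j + 2
      · have hDx : D j w := htr j v w hjv hvw
          (by rw [hwp]; intro h; exact hne2 (by linear_combination -h))
          hwj1
          (by rw [hwp]; intro h; exact hne3 (by linear_combination -h))
        refine (hBlmem j w).mpr (Or.inl ⟨hwp, ?_⟩)
        rw [← hwp]
        exact hDx
      · have hD1 : D j w := htr j v w hjv hvw
          (fun h => hwj h.symm) hwj1 (fun h => hwm (by linear_combination -h))
        have hD2 : D (j + 1) w := htr (j + 1) v w hj1v hvw
          (fun h => hwj1 h.symm) (fun h => hwp (by linear_combination h))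
          (fun h => hwj (by linear_combination -h))
        exact (hBlmem j w).mpr (Or.inr (Or.inr ⟨hD1, hD2⟩))
    have hpos : 0 < (Bl j).card := Finset.card_pos.mpr ⟨v, hvmem⟩
    have hAm : v - 1 ∈ Bl v := by
      by_contra hno
      have hssub : Bl v ⊆ (Bl j).erase v := by
        intro w hw
        rcases (hBlmem v w).mp hw with ⟨hw1, hw2⟩ | ⟨hw1, hw2⟩ | ⟨hw1, hw2⟩
        · have harc : D v w := by rw [hw1]; exact hw2
          obtain ⟨hm, hnv⟩ := subA w harc
          exact Finset.mem_erase.mpr ⟨hnv, hm⟩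
        · exact absurd (by rwa [hw1] at hw) hno
        · obtain ⟨hm, hnv⟩ := subA w hw1
          exact Finset.mem_erase.mpr ⟨hnv, hm⟩
      have hc1 := Finset.card_le_card hssub
      rw [Finset.card_erase_of_mem hvmem] at hc1
      have := hminj v
      omega
    have hA : D (v + 1) (v - 1) := by
      rcases (hBlmem v (v - 1)).mp hAm with ⟨h1, -⟩ | ⟨-, h2⟩ | ⟨h1, -⟩
      · exact absurd h1 (fun h => hne3 (by linear_combination -h))
      · exact h2
      · exact absurd ((hsub v (v - 1) h1).2.2 (by ring)) (fun f => f)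
    have hBm : v + 1 ∈ Bl (v - 1) := by
      by_contra hno
      have hssub : Bl (v - 1) ⊆ (Bl j).erase v := by
        intro w hw
        rcases (hBlmem (v - 1) w).mp hw with ⟨hw1, hw2⟩ | ⟨hw1, hw2⟩ | ⟨hw1, hw2⟩
        · have hwv1 : w = v + 1 := by rw [hw1]; ring
          exact absurd (by rwa [hwv1] at hw) hno
        · have harc : D v w := by
            rw [hw1]
            rwa [show v - 1 + 1 = v from by ring] at hw2
          obtain ⟨hm, hnv⟩ := subA w harc
          exact Finset.mem_erase.mpr ⟨hnv, hm⟩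
        · have harc : D v w := by rwa [show v - 1 + 1 = v from by ring] at hw2
          obtain ⟨hm, hnv⟩ := subA w harc
          exact Finset.mem_erase.mpr ⟨hnv, hm⟩
      have hc1 := Finset.card_le_card hssub
      rw [Finset.card_erase_of_mem hvmem] at hc1
      have := hminj (v - 1)
      omega
    have hB : D (v - 1) (v + 1) := by
      rcases (hBlmem (v - 1) (v + 1)).mp hBm with ⟨-, h2⟩ | ⟨h1, -⟩ | ⟨-, h2⟩
      · rwa [show v - 1 + 2 = v + 1 from by ring] at h2
      · exact absurd h1 (fun h => hne3 (by linear_combination h))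
      · have h2' : D v (v + 1) := by rwa [show v - 1 + 1 = v from by ring] at h2
        exact absurd ((hsub v (v + 1) h2').2.1 rfl) (fun f => f)
    exact hsimple (v - 1) (v + 1) ⟨hB, hA⟩
  -- main case analysis at the minimizer
  by_cases hg : ∃ v, D i v ∧ D (i + 1) v
  · obtain ⟨v, h1, h2⟩ := hg
    exact gcase i v hmin h1 h2
  push_neg at hg
  by_cases hm1 : i - 1 ∈ Bl i <;> by_cases hp2 : i + 2 ∈ Bl i
  -- case S3 : both special blockers
  · have hDm : D (i + 1) (i - 1) := by
      rcases (hBlmem i (i - 1)).mp hm1 with ⟨h1, -⟩ | ⟨-, h2⟩ | ⟨h1, h2⟩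
      · exact absurd h1 (fun h => hne3 (by linear_combination -h))
      · exact h2
      · exact absurd ((hsub i (i - 1) h1).2.2 (by ring)) (fun f => f)
    have hDp : D i (i + 2) := by
      rcases (hBlmem i (i + 2)).mp hp2 with ⟨-, h2⟩ | ⟨h1, -⟩ | ⟨h1, h2⟩
      · exact h2
      · exact absurd h1 (fun h => hne3 (by linear_combination h))
      · exact absurd ((hsub (i + 1) (i + 2) h2).2.1 (by ring)) (fun f => f)
    have hBi : Bl i = {i - 1, i + 2} := by
      apply Finset.ext
      intro w
      constructor
      · intro hw
        rcases (hBlmem i w).mp hw with ⟨h1, -⟩ | ⟨h1, -⟩ | ⟨h1, h2⟩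
        · simp [h1]
        · simp [h1]
        · exact absurd h2 (hg w h1)
      · intro hw
        simp only [Finset.mem_insert, Finset.mem_singleton] at hw
        rcases hw with rfl | rfl
        · exact hm1
        · exact hp2
    have hcard2 : (Bl i).card = 2 := by
      rw [hBi]
      rw [Finset.card_insert_of_notMem (by
        simp only [Finset.mem_singleton]
        exact fun h => hne3 (by linear_combination -h)), Finset.card_singleton]
    have hsubB1 : ∀ w ∈ Bl (i + 1), w = i - 1 ∨ w = i + 3 := by
      intro w hw
      rcases (hBlmem (i + 1) w).mp hw with ⟨h1, -⟩ | ⟨h1, h2⟩ | ⟨h1, h2⟩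
      · right
        rw [h1]
        ring
      · exfalso
        have h2' : D (i + 2) i := by
          rwa [show i + 1 + 1 = i + 2 from by ring, show i + 1 - 1 = i from by ring] at h2
        exact hsimple i (i + 2) ⟨hDp, h2'⟩
      · have h2' : D (i + 2) w := by rwa [show i + 1 + 1 = i + 2 from by ring] at h2
        by_cases hwm : w = i - 1
        · exact Or.inl hwm
        · exfalso
          have hDiw : D i w := htr i (i + 2) w hDp h2'
            (fun h => (hsub (i + 1) w h1).2.2 (by rw [← h]))
            (fun h => (hsub (i + 1) w h1).1 h.symm)
            (fun h => hwm (by linear_combination -h))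
          exact hg w hDiw h1
    have hc1 : 2 ≤ (Bl (i + 1)).card := by
      have := hmin (i + 1)
      omega
    have him : i - 1 ∈ Bl (i + 1) := by
      by_contra hno
      have hss : Bl (i + 1) ⊆ {i + 3} := by
        intro w hw
        rcases hsubB1 w hw with h | h
        · exact absurd (by rwa [h] at hw) hno
        · simp [h]
      have := Finset.card_le_card hss
      simp only [Finset.card_singleton] at this
      omega
    have harc : D (i + 1) (i - 1) ∧ D (i + 2) (i - 1) := by
      rcases (hBlmem (i + 1) (i - 1)).mp him with ⟨h1, -⟩ | ⟨h1, -⟩ | ⟨h1, h2⟩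
      · exact absurd h1 (fun h => hne4 (by linear_combination -h))
      · exact absurd h1 (fun h => hne1 (by linear_combination -h))
      · exact ⟨h1, by rwa [show i + 1 + 1 = i + 2 from by ring] at h2⟩
    have hmin1 : ∀ x, (Bl (i + 1)).card ≤ (Bl x).card := by
      intro x
      have hss : Bl (i + 1) ⊆ {i - 1, i + 3} := by
        intro w hw
        rcases hsubB1 w hw with h | h <;> simp [h]
      have hle := Finset.card_le_card hss
      have hle2 : ({i - 1, i + 3} : Finset (ZMod n)).card ≤ 2 := by
        apply le_trans (Finset.card_insert_le _ _)
        simp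
      have := hmin x
      omega
    exact gcase (i + 1) (i - 1) hmin1 harc.1
      (by rw [show i + 1 + 1 = i + 2 from by ring]; exact harc.2)
  -- case S2 : only the blocker i-1 (all-minus propagation)
  · have hDm : D (i + 1) (i - 1) := by
      rcases (hBlmem i (i - 1)).mp hm1 with ⟨h1, -⟩ | ⟨-, h2⟩ | ⟨h1, h2⟩
      · exact absurd h1 (fun h => hne3 (by linear_combination -h))
      · exact h2
      · exact absurd ((hsub i (i - 1) h1).2.2 (by ring)) (fun f => f)
    have hDp2 : D (i + 2) i := by
      have hnot : ¬ D i (i + 2) := fun h =>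
        hp2 ((hBlmem i (i + 2)).mpr (Or.inl ⟨rfl, h⟩))
      rcases hcover (i + 2) i
        (fun h => hne2 (by linear_combination h))
        (fun h => hne3 (by linear_combination -h))
        (fun h => hne1 (by linear_combination h)) with h | h
      · exact h
      · exact absurd h hnot
    have Qstep : ∀ j : ZMod n,
        (D (j + 1) (j - 1) ∧ D (j + 2) j ∧ ∀ w, ¬(D j w ∧ D (j + 1) w)) →
        (D j (j - 2) ∧ D (j + 1) (j - 1) ∧ ∀ w, ¬(D (j - 1) w ∧ D j w)) := by
      rintro j ⟨ha, hb, hc⟩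
      have hng : ∀ w, ¬(D (j - 1) w ∧ D j w) := by
        rintro w ⟨h1, h2⟩
        obtain ⟨f1, f2, f3⟩ := hsub _ _ h2
        by_cases hwp : w = j + 2
        · exact hsimple j (j + 2) ⟨by rwa [hwp] at h2, hb⟩
        · have hD1w : D (j + 1) w := htr (j + 1) (j - 1) w ha h1
            (fun h => f2 h.symm) (fun h => hwp (by linear_combination h))
            (fun h => f1 (by linear_combination h))
          exact hc w ⟨h2, hD1w⟩
      refine ⟨?_, ha, hng⟩
      obtain ⟨w, hw⟩ := hBne (j - 1)
      rcases (hBlmem (j - 1) w).mp hw with ⟨h1, h2⟩ | ⟨h1, h2⟩ | ⟨h1, h2⟩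
      · exfalso
        have h2' : D (j - 1) (j + 1) := by
          rwa [show j - 1 + 2 = j + 1 from by ring] at h2
        exact hsimple (j - 1) (j + 1) ⟨h2', ha⟩
      · have h2' : D j (j - 2) := by
          rwa [show j - 1 + 1 = j from by ring, show j - 1 - 1 = j - 2 from by ring] at h2
        exact h2'
      · exfalso
        have h2' : D j w := by rwa [show j - 1 + 1 = j from by ring] at h2
        exact hng w ⟨h1, h2'⟩
    have hQall : ∀ t : ℕ,
        D (i - t + 1) (i - t - 1) ∧ D (i - t + 2) (i - t) ∧
          ∀ w, ¬(D (i - t) w ∧ D (i - t + 1) w) := by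
      intro t
      induction t with
      | zero =>
        refine ⟨by simpa using hDm, by simpa using hDp2, ?_⟩
        intro w hw
        have hw0 : D i w ∧ D (i + 1) w := by simpa using hw
        exact hg w hw0.1 hw0.2
      | succ t ih =>
        have hout := Qstep (i - (t : ZMod n)) ih
        have e1 : i - ((t + 1 : ℕ) : ZMod n) = i - (t : ZMod n) - 1 := by
          push_cast
          ring
        rw [e1, show i - (t : ZMod n) - 1 + 1 = i - (t : ZMod n) from by ring,
          show i - (t : ZMod n) - 1 - 1 = i - (t : ZMod n) - 2 from by ring,
          show i - (t : ZMod n) - 1 + 2 = i - (t : ZMod n) + 1 from by ring]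
        exact hout
    have hallm : ∀ j : ZMod n, D (j + 2) j := by
      intro j
      have ht : i - (((i - j).val : ℕ) : ZMod n) = j := by
        rw [ZMod.natCast_val, ZMod.cast_id]
        ring
      have h := (hQall ((i - j).val)).2.1
      rwa [ht] at h
    exact chainF (fun a b => D b a)
      (fun a b c hab hbc h1 h2 h3 => htr c b a hbc hab (Ne.symm h1) h3 h2)
      (fun a b c hab hbc hca' => hnc a c b hca' hbc hab)
      (fun j => hallm j)
  -- case S1 : only the blocker i+2 (all-plus propagation)
  · have hDp : D i (i + 2) := by
      rcases (hBlmem i (i + 2)).mp hp2 with ⟨-, h2⟩ | ⟨h1, -⟩ | ⟨h1, h2⟩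
      · exact h2
      · exact absurd h1 (fun h => hne3 (by linear_combination h))
      · exact absurd ((hsub (i + 1) (i + 2) h2).2.1 (by ring)) (fun f => f)
    have hDm : D (i - 1) (i + 1) := by
      have hnot : ¬ D (i + 1) (i - 1) := fun h =>
        hm1 ((hBlmem i (i - 1)).mpr (Or.inr (Or.inl ⟨rfl, h⟩)))
      rcases hcover (i - 1) (i + 1)
        (fun h => hne2 (by linear_combination -h))
        (fun h => hne1 (by linear_combination h))
        (fun h => hne3 (by linear_combination -h)) with h | h
      · exact h
      · exact absurd h hnot
    have Pstep : ∀ j : ZMod n,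
        (D j (j + 2) ∧ D (j - 1) (j + 1) ∧ ∀ w, ¬(D j w ∧ D (j + 1) w)) →
        (D (j + 1) (j + 3) ∧ D j (j + 2) ∧ ∀ w, ¬(D (j + 1) w ∧ D (j + 2) w)) := by
      rintro j ⟨ha, hb, hc⟩
      have hng1 : ∀ w, ¬(D (j + 1) w ∧ D (j + 2) w) := by
        rintro w ⟨h1, h2⟩
        obtain ⟨e1, e2, e3⟩ := hsub _ _ h1
        by_cases hwm : w = j - 1
        · exact hsimple (j - 1) (j + 1) ⟨hb, by rwa [hwm] at h1⟩
        · have hDjw : D j w := htr j (j + 2) w ha h2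
            (fun h => e3 (by rw [h])) (fun h => e1 h.symm)
            (fun h => hwm (by linear_combination -h))
          exact hc w ⟨hDjw, h1⟩
      refine ⟨?_, ha, hng1⟩
      obtain ⟨w, hw⟩ := hBne (j + 1)
      rcases (hBlmem (j + 1) w).mp hw with ⟨h1, h2⟩ | ⟨h1, h2⟩ | ⟨h1, h2⟩
      · rwa [show j + 1 + 2 = j + 3 from by ring] at h2
      · exfalso
        have h2' : D (j + 2) j := by
          rwa [show j + 1 + 1 = j + 2 from by ring, show j + 1 - 1 = j from by ring] at h2
        exact hsimple j (j + 2) ⟨ha, h2'⟩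
      · exfalso
        have h2' : D (j + 2) w := by rwa [show j + 1 + 1 = j + 2 from by ring] at h2
        exact hng1 w ⟨h1, h2'⟩
    have hPall : ∀ t : ℕ,
        D (i + t) (i + t + 2) ∧ D (i + t - 1) (i + t + 1) ∧
          ∀ w, ¬(D (i + t) w ∧ D (i + t + 1) w) := by
      intro t
      induction t with
      | zero =>
        refine ⟨by simpa using hDp, by simpa using hDm, ?_⟩
        intro w hw
        have hw0 : D i w ∧ D (i + 1) w := by simpa using hw
        exact hg w hw0.1 hw0.2
      | succ t ih =>
        have hout := Pstep (i + (t : ZMod n)) ih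
        have e1 : i + ((t + 1 : ℕ) : ZMod n) = i + (t : ZMod n) + 1 := by
          push_cast
          ring
        rw [e1, show i + (t : ZMod n) + 1 + 2 = i + (t : ZMod n) + 3 from by ring,
          show i + (t : ZMod n) + 1 - 1 = i + (t : ZMod n) from by ring,
          show i + (t : ZMod n) + 1 + 1 = i + (t : ZMod n) + 2 from by ring]
        exact hout
    have hallp : ∀ j : ZMod n, D j (j + 2) := by
      intro j
      have ht : i + (((j - i).val : ℕ) : ZMod n) = j := by
        rw [ZMod.natCast_val, ZMod.cast_id]
        ring
      have h := (hPall ((j - i).val)).1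
      rwa [ht] at h
    exact chainF D htr hnc hallp
  -- case: no blockers at all, contradiction with nonemptiness
  · obtain ⟨w, hw⟩ := hBne i
    rcases (hBlmem i w).mp hw with ⟨h1, h2⟩ | ⟨h1, h2⟩ | ⟨h1, h2⟩
    · exact hp2 ((hBlmem i (i + 2)).mpr (Or.inl ⟨rfl, h2⟩))
    · exact hm1 ((hBlmem i (i - 1)).mpr (Or.inr (Or.inl ⟨rfl, h2⟩)))
    · exact hg w h1 h2
end

section
/- For every odd integer n ≥ 9, the anti-hole on n vertices (the complement of the cycle C_n) is not kernel-solvable: it admits a clique-acyclic orientation (reversible arcs allowed) that has no kernel. -/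
/-- second half of Proposition 3 of the paper.
For every odd `n ≥ 9`, the anti-hole on `n` vertices (the complement of the `n`-cycle,
with vertex set `ZMod n`, where `i` and `j` are adjacent iff `i ≠ j` and they are not
consecutive modulo `n`) is not kernel-solvable: it admits a clique-acyclic orientation
(every edge receives at least one of its two directions, reversible arcs allowed, no
arcs between non-adjacent vertices, and every nonempty clique has a vertex receiving an
arc from every other vertex of the clique) that has no kernel. -/
theorem stmt7 (n : ℕ) (hn : Odd n) (h9 : 9 ≤ n) :
    ∃ D : ZMod n → ZMod n → Prop,
      (∀ i j, D i j → i ≠ j ∧ j ≠ i + 1 ∧ i ≠ j + 1) ∧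
      (∀ i j : ZMod n, i ≠ j → j ≠ i + 1 → i ≠ j + 1 → D i j ∨ D j i) ∧
      (∀ K : Finset (ZMod n), K.Nonempty →
        (∀ u ∈ K, ∀ v ∈ K, u ≠ v → D u v ∨ D v u) →
        ∃ v ∈ K, ∀ u ∈ K, u ≠ v → D u v) ∧
      ¬ ∃ S : Set (ZMod n),
          (∀ u ∈ S, ∀ v ∈ S, u ≠ v → ¬ D u v) ∧
          (∀ v ∉ S, ∃ s ∈ S, D v s) := by
  haveI : NeZero n := ⟨by omega⟩
  have hc : ∀ c : ℕ, 0 < c → c < n → ((c : ℕ) : ZMod n) ≠ 0 := by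
    intro c hc1 hc2 h
    rw [ZMod.natCast_eq_zero_iff] at h
    exact absurd (Nat.le_of_dvd hc1 h) (by omega)
  have h1 : (1 : ZMod n) ≠ 0 := by have := hc 1 (by norm_num) (by omega); push_cast at this; exact this
  have h2 : (2 : ZMod n) ≠ 0 := by have := hc 2 (by norm_num) (by omega); push_cast at this; exact this
  have h3 : (3 : ZMod n) ≠ 0 := by have := hc 3 (by norm_num) (by omega); push_cast at this; exact this
  have h4 : (4 : ZMod n) ≠ 0 := by have := hc 4 (by norm_num) (by omega); push_cast at this; exact this
  refine ⟨fun i j => i ≠ j ∧ j ≠ i + 1 ∧ i ≠ j + 1 ∧ i ≠ j + 2, ?_, ?_, ?_, ?_⟩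
  · exact fun i j h => ⟨h.1, h.2.1, h.2.2.1⟩
  · intro i j hij hj1 hi1
    by_cases h : i = j + 2
    · right
      refine ⟨fun e => hij e.symm, hi1, hj1, fun e => h4 ?_⟩
      linear_combination -h - e
    · exact Or.inl ⟨hij, hj1, hi1, h⟩
  · intro K hK hclique
    by_cases hcl : ∀ v ∈ K, v + 2 ∈ K
    · exfalso
      obtain ⟨v₀, hv₀⟩ := hK
      have hiter : ∀ m : ℕ, v₀ + ((2 * m : ℕ) : ZMod n) ∈ K := by
        intro m
        induction m with
        | zero => simpa using hv₀
        | succ m ih =>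
          have h' : (v₀ : ZMod n) + ((2 * (m + 1) : ℕ) : ZMod n)
              = (v₀ + ((2 * m : ℕ) : ZMod n)) + 2 := by push_cast; ring
          rw [h']; exact hcl _ ih
      have hv1 : v₀ + 1 ∈ K := by
        have := hiter ((n + 1) / 2)
        have he : ((2 * ((n + 1) / 2) : ℕ) : ZMod n) = 1 := by
          have : 2 * ((n + 1) / 2) = n + 1 := by
            obtain ⟨k, hk⟩ := hn; omega
          rw [this]; push_cast [ZMod.natCast_self]; ring
        rwa [he] at this
      have hne : v₀ ≠ v₀ + 1 := fun e => h1 (by linear_combination -e)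
      rcases hclique v₀ hv₀ (v₀ + 1) hv1 hne with h | h
      · exact h.2.1 rfl
      · exact h.2.2.1 rfl
    · push_neg at hcl
      obtain ⟨v, hvK, hv2⟩ := hcl
      refine ⟨v, hvK, fun u huK hune => ?_⟩
      have hu2 : u ≠ v + 2 := fun e => hv2 (e ▸ huK)
      rcases hclique u huK v hvK hune with h | h
      · exact h
      · exact ⟨hune, h.2.2.1, h.2.1, hu2⟩
  · rintro ⟨S, hind, habs⟩
    -- S is nonempty
    have hSne : ∃ s, s ∈ S := by
      by_cases h0 : (0 : ZMod n) ∈ S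
      · exact ⟨0, h0⟩
      · obtain ⟨s, hs, _⟩ := habs 0 h0; exact ⟨s, hs⟩
    obtain ⟨s₀, hs₀⟩ := hSne
    -- key step: S is closed under subtracting 1
    have hstep : ∀ s, s ∈ S → s - 1 ∈ S := by
      intro s hs
      have hv : s + 2 ∉ S := by
        intro hv
        refine hind s hs (s + 2) hv (fun e => h2 (by linear_combination -e))
          ⟨fun e => h2 (by linear_combination -e), fun e => h1 (by linear_combination e),
           fun e => h3 (by linear_combination -e), fun e => h4 (by linear_combination -e)⟩
      obtain ⟨t, htS, htD⟩ := habs (s + 2) hv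
      obtain ⟨hd1, hd2, hd3, hd4⟩ := htD
      have hts : t ≠ s := fun e => hd4 (by linear_combination -e)
      have hnd := hind t htS s hs hts
      -- ¬ D t s forces t = s - 1
      have hteq : t = s - 1 := by
        by_contra hcon
        apply hnd
        refine ⟨hts, fun e => ?_, fun e => hd3 (by linear_combination -e),
          fun e => hd1 (by linear_combination -e)⟩
        exact hcon (by linear_combination -e)
      rwa [hteq] at htS
    have hs1 : s₀ - 1 ∈ S := hstep s₀ hs₀
    have hs2 : s₀ - 1 - 1 ∈ S := hstep _ hs1
    refine hind (s₀ - 1 - 1) hs2 s₀ hs₀ (fun e => h2 (by linear_combination -e))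
      ⟨fun e => h2 (by linear_combination -e), fun e => h1 (by linear_combination e),
       fun e => h3 (by linear_combination -e), fun e => h4 (by linear_combination -e)⟩
end

section
/- Let (P, ≼) be a finite poset and let A be the collection of all antichains of P, partially ordered by: α ≼ α' whenever for each element x of α there exists an element x' of α' with x ≼ x'. Then every chain in (A, ≼) has at most |P| + 1 elements. -/
/-!
Send each antichain `α` to its down-set `lowerClosure α`. This turns the order on antichains
into inclusion of down-sets, and it is injective on antichains because an antichain is recovered
as the set of maximal elements of its down-set. A chain of antichains therefore becomes a chain
of subsets of `P`, whose members have pairwise distinct cardinalities in `{0, …, |P|}`.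
-/

theorem lowerClosure_le_lowerClosure_iff {α : Type*} [Preorder α] {s t : Set α} :
    lowerClosure s ≤ lowerClosure t ↔ ∀ x ∈ s, ∃ y ∈ t, x ≤ y := by
  simp only [lowerClosure_le, Set.subset_def, SetLike.mem_coe, mem_lowerClosure]

theorem lowerClosure_injOn_isAntichain {α : Type*} [PartialOrder α] :
    Set.InjOn lowerClosure {s : Set α | IsAntichain (· ≤ ·) s} := by
  intro s hs t ht hst
  ext x
  rw [← hs.maximal_mem_lowerClosure_iff_mem, ← ht.maximal_mem_lowerClosure_iff_mem, hst]

theorem Finset.card_le_card_add_one_of_isChain_subset {α : Type*} [Fintype α]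
    (𝒞 : Finset (Set α)) (h𝒞 : IsChain (· ⊆ ·) (𝒞 : Set (Set α))) :
    𝒞.card ≤ Fintype.card α + 1 := by
  have hmaps : Set.MapsTo (Set.ncard (α := α)) 𝒞 (Finset.range (Fintype.card α + 1)) :=
    fun s _ => by
      simpa [Nat.lt_succ_iff, Nat.card_eq_fintype_card] using Set.ncard_le_card (s : Set α)
  have hinj : Set.InjOn (Set.ncard (α := α)) 𝒞 := by
    intro s hs t ht hst
    by_contra hne
    rcases h𝒞 hs ht hne with hsub | hsub
    · exact hne (Set.eq_of_subset_of_ncard_le hsub hst.ge)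
    · exact hne (Set.eq_of_subset_of_ncard_le hsub hst.le).symm
  simpa using Finset.card_le_card_of_injOn _ hmaps hinj

/-- upper bound in Lemma 2 of the paper.
Let `(P, ≤)` be a finite poset and order the antichains of `P` by
`α ≼ α' ↔ ∀ x ∈ α, ∃ x' ∈ α', x ≤ x'`. Then every chain of antichains in this
order has at most `|P| + 1` elements. -/
theorem stmt11 {P : Type*} [PartialOrder P] [Fintype P]
    (C : Finset (Set P))
    (hC : ∀ α ∈ C, IsAntichain (· ≤ ·) α)
    (hchain : IsChain (fun α α' : Set P => ∀ x ∈ α, ∃ x' ∈ α', x ≤ x') ↑C) :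
    C.card ≤ Fintype.card P + 1 := by
  classical
  let downSet : Set P → Set P := fun α => lowerClosure α
  have hinj : Set.InjOn downSet C := fun α hα β hβ h =>
    lowerClosure_injOn_isAntichain (hC α hα) (hC β hβ) (SetLike.coe_injective h)
  have himage : IsChain (· ⊆ ·) ((C.image downSet : Finset (Set P)) : Set (Set P)) := by
    rw [Finset.coe_image]
    exact hchain.image_of_map_rel _ _ downSet fun α β hαβ =>
      LowerSet.coe_subset_coe.mpr (lowerClosure_le_lowerClosure_iff.mpr hαβ)
  rw [← Finset.card_image_of_injOn hinj]
  exact Finset.card_le_card_add_one_of_isChain_subset _ himage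
end

section
/- Let (P, ≼) be a finite poset and let A be the collection of all antichains of P, partially ordered by: α ≼ α' whenever for each element x of α there exists an element x' of α' with x ≼ x'. Then (A, ≼) contains a chain with exactly |P| + 1 elements. -/
/-!
Enumerate `P` along a linear extension as `x₀, x₁, …, xₙ₋₁` and, for `k ≤ n`, let `Aₖ` be the
set of maximal elements of the prefix `{x₀, …, xₖ₋₁}`. Maximal elements always form an antichain,
and since every element of a finite set lies below one of its maximal elements, `Aₖ ≼ Aₗ` whenever
`k ≤ l`. The sets are pairwise distinct: `xₗ₋₁` is maximal in the `l`-th prefix, because everything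
above it comes later in the linear extension, but it does not belong to any shorter prefix.
-/

open Set

section MaximalElements

variable {P : Type*} [PartialOrder P]

lemma exists_maximal_ge_of_subset {s t : Set P} (ht : t.Finite) (hst : s ⊆ t) :
    ∀ x ∈ {x | Maximal (· ∈ s) x}, ∃ x' ∈ {x | Maximal (· ∈ t) x}, x ≤ x' :=
  fun _ hx =>
    let ⟨x', hxx', hx'⟩ := ht.exists_le_maximal (hst hx.prop)
    ⟨x', hx', hxx'⟩

lemma isChain_range_setOf_maximal {ι : Type*} [LinearOrder ι] {S : ι → Set P}
    (hS : Monotone S) (hfin : ∀ i, (S i).Finite) :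
    IsChain (fun α α' : Set P => ∀ x ∈ α, ∃ x' ∈ α', x ≤ x')
      (range fun i => {x | Maximal (· ∈ S i) x}) := by
  rintro _ ⟨i, rfl⟩ _ ⟨j, rfl⟩ -
  rcases le_total i j with hij | hji
  · exact Or.inl (exists_maximal_ge_of_subset (hfin j) (hS hij))
  · exact Or.inr (exists_maximal_ge_of_subset (hfin i) (hS hji))

end MaximalElements

lemma exists_monotone_equiv_fin (P : Type*) [PartialOrder P] [Fintype P] :
    ∃ e : P ≃ Fin (Fintype.card P), Monotone e := by
  let _ : Fintype (LinearExtension P) := ‹Fintype P›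
  let f := monoEquivOfFin (LinearExtension P) rfl
  exact ⟨f.symm.toEquiv, f.symm.monotone.comp toLinearExtension.monotone⟩

section Enumeration

variable {P : Type*} [PartialOrder P] {n : ℕ} {e : P ≃ Fin n}

lemma maximal_symm_mem_prefix_succ (he : Monotone e) (i : Fin n) :
    Maximal (· ∈ {x | (e x : ℕ) < i + 1}) (e.symm i) := by
  refine ⟨by simp, fun y (hy : (e y : ℕ) < i + 1) hle => ?_⟩
  have hiy : i ≤ e y := by simpa using he hle
  have : e y = i := Fin.ext (by omega)
  rw [← this, e.symm_apply_apply]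

lemma setOf_maximal_prefix_ne (he : Monotone e) {k l : ℕ} (hkl : k < l) (hl : l ≤ n) :
    {x | Maximal (· ∈ {x | (e x : ℕ) < k}) x} ≠ {x | Maximal (· ∈ {x | (e x : ℕ) < l}) x} := by
  intro h
  have hmem : e.symm ⟨l - 1, by omega⟩ ∈ {x | Maximal (· ∈ {x | (e x : ℕ) < l}) x} := by
    simpa [Nat.sub_add_cancel (show 1 ≤ l by omega)] using
      maximal_symm_mem_prefix_succ he ⟨l - 1, by omega⟩
  rw [← h] at hmem
  have : l - 1 < k := by simpa using hmem.prop
  omega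

lemma injOn_setOf_maximal_prefix (he : Monotone e) :
    InjOn (fun k : ℕ => {x | Maximal (· ∈ {x | (e x : ℕ) < k}) x}) (Iic n) := by
  intro k hk l hl h
  by_contra hne
  rcases lt_or_gt_of_ne hne with hkl | hlk
  · exact setOf_maximal_prefix_ne he hkl hl h
  · exact setOf_maximal_prefix_ne he hlk hk h.symm

end Enumeration

/-- sharpness in Lemma 2 of the paper.
Let `(P, ≤)` be a finite poset and order the antichains of `P` by
`α ≼ α' ↔ ∀ x ∈ α, ∃ x' ∈ α', x ≤ x'`. Then there is a chain of antichains in this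
order with exactly `|P| + 1` elements. -/
theorem stmt12 {P : Type*} [PartialOrder P] [Fintype P] :
    ∃ C : Finset (Set P),
      (∀ α ∈ C, IsAntichain (· ≤ ·) α) ∧
      IsChain (fun α α' : Set P => ∀ x ∈ α, ∃ x' ∈ α', x ≤ x') ↑C ∧
      C.card = Fintype.card P + 1 := by
  classical
  obtain ⟨e, he⟩ := exists_monotone_equiv_fin P
  let A : ℕ → Set P := fun k => {x | Maximal (· ∈ {x | (e x : ℕ) < k}) x}
  refine ⟨(Finset.range (Fintype.card P + 1)).image A, ?_, ?_, ?_⟩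
  · simp only [Finset.mem_image]
    rintro _ ⟨k, -, rfl⟩
    exact setOfPred_maximal_antichain _
  · have hprefix : Monotone fun k : ℕ => {x | (e x : ℕ) < k} :=
      fun _ _ hkl _ hx => lt_of_lt_of_le hx hkl
    refine (isChain_range_setOf_maximal hprefix fun _ => toFinite _).mono ?_
    simp only [Finset.coe_image]
    exact image_subset_range _ _
  · rw [Finset.card_image_of_injOn, Finset.card_range]
    exact (injOn_setOf_maximal_prefix he).mono fun k hk => by
      simpa [Nat.lt_succ_iff] using hk
end

section
/- Let D be a nonempty finite digraph whose arcs are each colored blue or red (write u →b v for a blue arc and u →r v for a red arc) such that: (i) if u →b v and v →b w, then u →b w or (w →r u and w →r v); (ii) if u →r v and v →r w, then u →r w or (v →b u and w →b u). Then there is a vertex v such that for every vertex w, if v →r w then there is an arc (of either color) from w to v. -/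
/-- Lemma 3 of the paper.
Let `D` be a nonempty finite digraph whose arcs are colored blue (`b`) or red (`r`) —
no loops, each arc having exactly one color — satisfying:
(i) if `u →b v` and `v →b w`, then `u →b w` or (`w →r u` and `w →r v`);
(ii) if `u →r v` and `v →r w`, then `u →r w` or (`v →b u` and `w →b u`).
Then there is a vertex `v` such that whenever `v →r w`, there is an arc (of either
color) from `w` to `v`. -/
theorem stmt13 {V : Type*} [Fintype V] [Nonempty V] (b r : V → V → Prop)
    (hb_loop : ∀ v, ¬ b v v) (hr_loop : ∀ v, ¬ r v v)
    (hdisj : ∀ u v, ¬ (b u v ∧ r u v))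
    (hi : ∀ u v w, b u v → b v w → b u w ∨ (r w u ∧ r w v))
    (hii : ∀ u v w, r u v → r v w → r u w ∨ (b v u ∧ b w u)) :
    ∃ v : V, ∀ w, r v w → b w v ∨ r w v := by
  by_contra h
  push_neg at h
  choose f hfr hfnb hfnr using h
  obtain ⟨v0⟩ := ‹Nonempty V›
  obtain ⟨m, n, hne, heq⟩ := Finite.exists_ne_map_eq_of_infinite (fun k => f^[k] v0)
  have main : ∀ m n : ℕ, m < n → f^[m] v0 = f^[n] v0 → False := by
    intro m n hmn heq
    have key : ∀ k, 1 ≤ k → k ≤ n - m → r (f^[n-k] v0) (f^[m] v0) := by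
      intro k
      induction k with
      | zero => intro h1 _; omega
      | succ k ih =>
        intro _ hk
        rcases Nat.eq_zero_or_pos k with rfl | hpos
        · have h1 : f^[n] v0 = f (f^[n-1] v0) := by
            conv_lhs => rw [show n = (n-1)+1 by omega]
            rw [Function.iterate_succ_apply']
          have h2 := hfr (f^[n-1] v0)
          rw [← h1, ← heq] at h2
          exact h2
        · have ih' := ih hpos (by omega)
          have h1 : f^[n-k] v0 = f (f^[n-(k+1)] v0) := by
            conv_lhs => rw [show n - k = (n-(k+1))+1 by omega]
            rw [Function.iterate_succ_apply']
          have hr1 : r (f^[n-(k+1)] v0) (f^[n-k] v0) := by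
            rw [h1]; exact hfr _
          rcases hii _ _ _ hr1 ih' with h | h
          · exact h
          · rw [h1] at h
            exact absurd h.1 (hfnb _)
    have hfin := key (n - m) (by omega) le_rfl
    rw [show n - (n - m) = m by omega] at hfin
    exact hr_loop _ hfin
  rcases hne.lt_or_gt with h1 | h1
  · exact main m n h1 heq
  · exact main n m h1 heq.symm
end

section
/- Let D be a finite digraph whose arcs are each colored blue or red (write u →b v for a blue arc and u →r v for a red arc) such that: (i) if u →b v and v →b w, then u →b w or (w →r u and w →r v); (ii) if u →r v and v →r w, then u →r w or (v →b u and w →b u). If there is a directed path from a vertex u to a vertex v all of whose arcs are blue, then u →b v or v →r u. -/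
/-!
Induct on the length of a blue path `u → ⋯ → z → w → v`. If `z →b v`, dropping `w` gives a
shorter blue path. Otherwise (i) yields `v →r w`, and the induction hypothesis for the path
ending at `w` gives `u →b w` or `w →r u`; in the first case (i) on `u →b w →b v`, in the second
case (ii) on `v →r w →r u`, yields `u →b v` or `v →r u`.
-/

section

variable {V : Type*} {b r : V → V → Prop}
  (hi : ∀ u v w, b u v → b v w → b u w ∨ (r w u ∧ r w v))
  (hii : ∀ u v w, r u v → r v w → r u w ∨ (b v u ∧ b w u))

include hi hii

theorem blue_or_red_of_blue_of_red {u v w : V} (hwv : b w v) (hvw : r v w)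
    (huw : b u w ∨ r w u) : b u v ∨ r v u := by
  rcases huw with huw | hwu
  · exact (hi u w v huw hwv).imp_right And.left
  · exact (hii v w u hvw hwu).symm.imp_left And.right

theorem blue_or_red_of_isChain_flip :
    ∀ {v u : V} (l : List V), (v :: l).IsChain (flip b) → l.getLast? = some u →
      b u v ∨ r v u
  | _, _, [], _, hlast => by simp at hlast
  | _, _, [w], hchain, hlast => by
    obtain rfl : w = _ := by simpa using hlast
    exact Or.inl (List.isChain_cons_cons.mp hchain).1
  | v, u, w :: z :: rest, hchain, hlast => by
    obtain ⟨hwv, hzw, htail⟩ : b w v ∧ b z w ∧ (z :: rest).IsChain (flip b) := by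
      simpa only [List.isChain_cons_cons, flip] using hchain
    have hlast' : (z :: rest).getLast? = some u := by
      simpa only [List.getLast?_cons_cons] using hlast
    rcases hi z w v hzw hwv with hzv | ⟨-, hvw⟩
    · exact blue_or_red_of_isChain_flip (z :: rest)
        (List.isChain_cons_cons.mpr ⟨hzv, htail⟩) hlast'
    · exact blue_or_red_of_blue_of_red hi hii hwv hvw
        (blue_or_red_of_isChain_flip (z :: rest) (List.isChain_cons_cons.mpr ⟨hzw, htail⟩) hlast')
termination_by _ _ l => l.length

end

theorem stmt14_general {V : Type*} (b r : V → V → Prop)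
    (hi : ∀ u v w, b u v → b v w → b u w ∨ (r w u ∧ r w v))
    (hii : ∀ u v w, r u v → r v w → r u w ∨ (b v u ∧ b w u))
    (u v : V)
    (hpath : ∃ l : List V, l.Nodup ∧ 2 ≤ l.length ∧
      l.head? = some u ∧ l.getLast? = some v ∧ l.Chain' b) :
    b u v ∨ r v u := by
  obtain ⟨l, -, hlen, hhead, hlast, hchain⟩ := hpath
  obtain ⟨t, ht⟩ : ∃ t, l.reverse = v :: t :=
    List.head?_eq_some_iff.mp (by rwa [List.head?_reverse])
  have hchain' : (v :: t).IsChain (flip b) := by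
    rw [← ht, List.isChain_reverse]
    exact hchain
  have hne : t ≠ [] := by
    rintro rfl
    have := congrArg List.length ht
    simp only [List.length_reverse, List.length_singleton] at this
    omega
  have hlast' : t.getLast? = some u := by
    rwa [← List.getLast?_cons_of_ne_nil hne, ← ht, List.getLast?_reverse]
  exact blue_or_red_of_isChain_flip hi hii t hchain' hlast'

/-- Lemma 4 of the paper.
Let `D` be a finite digraph whose arcs are colored blue (`b`) or red (`r`) — no loops,
each arc having exactly one color — satisfying:
(i) if `u →b v` and `v →b w`, then `u →b w` or (`w →r u` and `w →r v`);
(ii) if `u →r v` and `v →r w`, then `u →r w` or (`v →b u` and `w →b u`).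
If there is a blue directed path from `u` to `v` (a list of at least two distinct
vertices, starting at `u`, ending at `v`, with a blue arc between consecutive ones),
then `u →b v` or `v →r u`. -/
theorem stmt14 {V : Type*} [Fintype V] (b r : V → V → Prop)
    (hb_loop : ∀ v, ¬ b v v) (hr_loop : ∀ v, ¬ r v v)
    (hdisj : ∀ u v, ¬ (b u v ∧ r u v))
    (hi : ∀ u v w, b u v → b v w → b u w ∨ (r w u ∧ r w v))
    (hii : ∀ u v w, r u v → r v w → r u w ∨ (b v u ∧ b w u))
    (u v : V)
    (hpath : ∃ l : List V, l.Nodup ∧ 2 ≤ l.length ∧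
      l.head? = some u ∧ l.getLast? = some v ∧ l.Chain' b) :
    b u v ∨ r v u :=
  stmt14_general b r hi hii u v hpath
end

section
/- Let D be a finite acyclic digraph (a digraph with no directed cycle). Let 𝒟 be the digraph whose vertices are the independent sets of D and in which (I, I') is an arc if and only if I ≠ I' and every vertex v ∈ I \ I' has an arc in D to some vertex of I'. Then 𝒟 is acyclic. -/
private lemma exists_last_true (Q : ℕ → Prop) {a b : ℕ} (hab : a ≤ b)
    (ha : Q a) (hb : ¬ Q b) : ∃ m, a ≤ m ∧ Q m ∧ ¬ Q (m + 1) := by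
  by_contra h
  push_neg at h
  exact hb (Nat.le_induction ha (fun m hm ih => h m hm ih) b hab)

private lemma exists_chainFun {α : Type*} {R : α → α → Prop} {a b : α}
    (h : Relation.ReflTransGen R a b) :
    ∃ (n : ℕ) (f : ℕ → α), f 0 = a ∧ (∀ j, n ≤ j → f j = b) ∧
      ∀ j < n, R (f j) (f (j + 1)) := by
  refine Relation.ReflTransGen.head_induction_on h ?_ ?_
  · exact ⟨0, fun _ => b, rfl, fun _ _ => rfl, fun j hj => absurd hj (Nat.not_lt_zero j)⟩
  · rintro a c hac hcb ⟨n, f, hf0, hfb, hstep⟩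
    refine ⟨n + 1, fun j => if j = 0 then a else f (j - 1), if_pos rfl, fun j hj => ?_,
      fun j hj => ?_⟩
    · have h1 : j ≠ 0 := by omega
      simp only [if_neg h1]
      exact hfb _ (by omega)
    · rcases Nat.eq_zero_or_pos j with h0 | h0
      · subst h0
        simp only [if_pos rfl, if_neg one_ne_zero]
        simpa [hf0] using hac
      · have h1 : j ≠ 0 := by omega
        have h2 : j + 1 ≠ 0 := by omega
        simp only [if_neg h1, if_neg h2]
        have h3 : j - 1 + 1 = j := by omega
        have h4 : j + 1 - 1 = j := by omega
        rw [h4]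
        have := hstep (j - 1) (by omega)
        rwa [h3] at this

private lemma exists_periodic {α : Type*} {R : α → α → Prop} {a : α}
    (h : Relation.TransGen R a a) :
    ∃ (n : ℕ) (g : ℕ → α), 0 < n ∧ (∀ k, R (g k) (g (k + 1))) ∧ (∀ k, g (k + n) = g k) := by
  obtain ⟨c, hac, hca⟩ : ∃ c, R a c ∧ Relation.ReflTransGen R c a :=
    Relation.TransGen.head'_iff.mp h
  obtain ⟨n, f, hf0, hfa, hstep⟩ := exists_chainFun hca
  classical
  set m := n + 1 with hm
  set F : ℕ → α := fun j => if j = 0 then a else f (j - 1) with hF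
  have hF0 : F 0 = a := if_pos rfl
  have hFm : F m = a := by
    simp only [hF, hm, if_neg (Nat.succ_ne_zero n), Nat.add_sub_cancel]
    exact hfa n le_rfl
  have hFstep : ∀ j < m, R (F j) (F (j + 1)) := by
    intro j hj
    rcases Nat.eq_zero_or_pos j with h0 | h0
    · subst h0
      simp only [hF, if_pos rfl, if_neg one_ne_zero]
      simpa [hf0] using hac
    · have h1 : j ≠ 0 := by omega
      have h2 : j + 1 ≠ 0 := by omega
      simp only [hF, if_neg h1, if_neg h2]
      have h3 : j - 1 + 1 = j := by omega
      have h4 : j + 1 - 1 = j := by omega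
      rw [h4]
      have := hstep (j - 1) (by omega)
      rwa [h3] at this
  refine ⟨m, fun k => F (k % m), Nat.succ_pos n, ?_, ?_⟩
  · intro k
    have hjm : k % m < m := Nat.mod_lt _ (Nat.succ_pos n)
    have h1 : (k + 1) % m = (k % m + 1) % m := (Nat.mod_add_mod k m 1).symm
    simp only
    rcases Nat.lt_or_ge (k % m + 1) m with hlt | hge
    · rw [h1, Nat.mod_eq_of_lt hlt]
      exact hFstep _ hjm
    · have heq : k % m + 1 = m := by omega
      have h2 : (k + 1) % m = 0 := by rw [h1, heq, Nat.mod_self]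
      rw [h2, hF0]
      have h3 := hFstep _ hjm
      rw [heq, hFm] at h3
      exact h3
  · intro k
    simp only [Nat.add_mod_right]

/-- Lemma 6 of the paper, after Blidia and Engel.
Let `D` be a finite acyclic digraph. Let `𝒟` be the digraph whose vertices are the
independent sets of `D`, with an arc `(I, I')` iff `I ≠ I'` and every vertex of
`I \ I'` has an arc in `D` to some vertex of `I'`. Then `𝒟` is acyclic. -/
theorem stmt15 {V : Type*} [Fintype V] (D : V → V → Prop)
    (hacyc : ∀ v, ¬ Relation.TransGen D v v) :
    ∀ I : Set V, ¬ Relation.TransGen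
      (fun I I' : Set V =>
        (∀ x ∈ I, ∀ y ∈ I, x ≠ y → ¬ D x y) ∧
        (∀ x ∈ I', ∀ y ∈ I', x ≠ y → ¬ D x y) ∧
        I ≠ I' ∧ ∀ x ∈ I \ I', ∃ y ∈ I', D x y) I I := by
  intro I htc
  obtain ⟨n, g, hn, hstep, hper⟩ := exists_periodic htc
  have hind : ∀ k, ∀ x ∈ g k, ∀ y ∈ g k, x ≠ y → ¬ D x y := by
    intro k
    cases k with
    | zero => exact (hstep 0).1
    | succ k => exact (hstep k).2.1
  set P : V → Prop := fun v => ∃ i, v ∈ g i ∧ v ∉ g (i + 1) with hP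
  have key : ∀ v, P v → ∃ u, D v u ∧ P u := by
    rintro v ⟨i, hvi, hvi1⟩
    obtain ⟨_, _, _, hdom⟩ := hstep i
    obtain ⟨y, hy, hDvy⟩ := hdom v ⟨hvi, hvi1⟩
    have hvb : v ∈ g (i + n) := (hper i).symm ▸ hvi
    obtain ⟨j, hij, hvj, hvj1⟩ :=
      exists_last_true (fun m => v ∉ g m) (a := i + 1) (b := i + n) (by omega) hvi1
        (not_not_intro hvb)
    rw [not_not] at hvj1
    have hyj1 : y ∉ g (j + 1) := fun hyj =>
      hind (j + 1) v hvj1 y hyj (fun h => hvi1 (h ▸ hy)) hDvy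
    obtain ⟨m, _, hym, hym1⟩ :=
      exists_last_true (fun m => y ∈ g m) (a := i + 1) (b := j + 1) (by omega) hy hyj1
    exact ⟨y, hDvy, m, hym, hym1⟩
  haveI : IsTrans V (Function.swap (Relation.TransGen D)) :=
    ⟨fun a b c h1 h2 => Relation.TransGen.trans h2 h1⟩
  haveI : IsIrrefl V (Function.swap (Relation.TransGen D)) := ⟨fun a => hacyc a⟩
  have hwf : WellFounded (Function.swap (Relation.TransGen D)) :=
    Finite.wellFounded_of_trans_of_irrefl _
  have hnoP : ∀ v, ¬ P v := by
    intro v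
    induction v using hwf.induction with
    | _ v ih =>
      rintro hv
      obtain ⟨u, hDu, hPu⟩ := key v hv
      exact ih u (Relation.TransGen.single hDu) hPu
  obtain ⟨_, _, hne, _⟩ := hstep 0
  obtain ⟨v, hv⟩ : ∃ v, ¬ (v ∈ g 0 ↔ v ∈ g 1) := by
    by_contra h
    push_neg at h
    exact hne (Set.ext h)
  rcases Classical.em (v ∈ g 0) with h0 | h0
  · have h1 : v ∉ g 1 := fun h1 => hv ⟨fun _ => h1, fun _ => h0⟩
    exact hnoP v ⟨0, h0, h1⟩
  · have h1 : v ∈ g 1 := by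
      by_contra h1
      exact hv ⟨fun h => absurd h h0, fun h => absurd h h1⟩
    have hgn : v ∉ g n := by
      have : g (0 + n) = g 0 := hper 0
      simp only [Nat.zero_add] at this
      rw [this]
      exact h0
    obtain ⟨m, _, hm1, hm2⟩ :=
      exists_last_true (fun m => v ∈ g m) (a := 1) (b := n) hn h1 hgn
    exact hnoP v ⟨m, hm1, hm2⟩
end

section
/- Let n ≥ 9 be an odd integer and let D be a simple clique-acyclic orientation of the anti-hole on n vertices, with vertices v_1, …, v_n numbered so that v_i and v_{i+1} are non-adjacent (indices modulo n). Then there exists an index i such that both (v_{i-2}, v_i) and (v_{i+2}, v_i) are arcs of D (indices modulo n). -/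
section Aux

variable {n : ℕ}

lemma castNe (h9 : 9 ≤ n) {a b : ℕ} (ha : a < n) (hb : b < n) (hab : a ≠ b) :
    (a : ZMod n) ≠ (b : ZMod n) := by
  haveI : NeZero n := ⟨by omega⟩
  intro h
  apply hab
  have := congrArg ZMod.val h
  rwa [ZMod.val_cast_of_lt ha, ZMod.val_cast_of_lt hb] at this

lemma addNe (h9 : 9 ≤ n) {a b : ℕ} (ha : a < n) (hb : b < n) (hab : a ≠ b) (i : ZMod n) :
    i + (a : ZMod n) ≠ i + (b : ZMod n) :=
  fun h => castNe h9 ha hb hab (add_left_cancel h)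

lemma shiftNe (h9 : 9 ≤ n) {d : ℕ} (h0 : 0 < d) (hd : d < n) (i : ZMod n) :
    i ≠ i + (d : ZMod n) := by
  intro h
  have hd0 : (d : ZMod n) = 0 := (left_eq_add.mp h)
  exact castNe h9 (a := d) (b := 0) hd (by omega) (by omega) (by simpa using hd0)

lemma cover2 {D : ZMod n → ZMod n → Prop} (h9 : 9 ≤ n)
    (hcover : ∀ i j : ZMod n, i ≠ j → j ≠ i + 1 → i ≠ j + 1 → D i j ∨ D j i)
    {d : ℕ} (h2 : 2 ≤ d) (hd : d + 1 < n) (i : ZMod n) :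
    D i (i + (d : ZMod n)) ∨ D (i + (d : ZMod n)) i := by
  apply hcover
  · exact shiftNe h9 (by omega) (by omega) i
  · intro h
    have h1 : (d : ZMod n) = ((1 : ℕ) : ZMod n) := by
      have := add_left_cancel h
      simpa using this
    exact castNe h9 (by omega) (by omega) (by omega) h1
  · intro h
    have h' : i = i + ((d + 1 : ℕ) : ZMod n) := by push_cast; linear_combination h
    exact shiftNe h9 (by omega) (by omega) i h'

lemma tri {D : ZMod n → ZMod n → Prop}
    (hsimple : ∀ i j, ¬ (D i j ∧ D j i))
    (hca : ∀ K : Finset (ZMod n), K.Nonempty →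
      (∀ u ∈ K, ∀ v ∈ K, u ≠ v → D u v ∨ D v u) →
      ∃ v ∈ K, ∀ u ∈ K, u ≠ v → D u v)
    {a b c : ZMod n} (hab : D a b) (hbc : D b c) (hac : D a c ∨ D c a)
    (nab : a ≠ b) (nbc : b ≠ c) (nac : a ≠ c) : D a c := by
  obtain ⟨v, hv, hsink⟩ := hca {a, b, c} ⟨a, by simp⟩ (by
    intro u hu w hw huw
    simp only [Finset.mem_insert, Finset.mem_singleton] at hu hw
    rcases hu with rfl | rfl | rfl <;> rcases hw with rfl | rfl | rfl <;>
      first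
        | exact absurd rfl huw
        | exact Or.inl hab
        | exact Or.inr hab
        | exact Or.inl hbc
        | exact Or.inr hbc
        | exact hac
        | exact hac.symm)
  simp only [Finset.mem_insert, Finset.mem_singleton] at hv
  rcases hv with rfl | rfl | rfl
  · exact absurd ⟨hab, hsink b (by simp) nab.symm⟩ (hsimple _ _)
  · exact absurd ⟨hbc, hsink c (by simp) nbc.symm⟩ (hsimple _ _)
  · exact hsink a (by simp) nac

lemma chainLem {D : ZMod n → ZMod n → Prop} (h9 : 9 ≤ n)
    (hcover : ∀ i j : ZMod n, i ≠ j → j ≠ i + 1 → i ≠ j + 1 → D i j ∨ D j i)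
    (hsimple : ∀ i j, ¬ (D i j ∧ D j i))
    (hca : ∀ K : Finset (ZMod n), K.Nonempty →
      (∀ u ∈ K, ∀ v ∈ K, u ≠ v → D u v ∨ D v u) →
      ∃ v ∈ K, ∀ u ∈ K, u ≠ v → D u v)
    (hall : ∀ i, D i (i + 2)) :
    ∀ k : ℕ, 1 ≤ k → 2 * k + 3 ≤ n → ∀ i, D i (i + ((2 * k : ℕ) : ZMod n)) := by
  intro k
  induction k with
  | zero => omega
  | succ m ih =>
    intro _ hkn i
    by_cases hm : m = 0
    · subst hm
      have := hall i
      have hc : ((2 * 1 : ℕ) : ZMod n) = (2 : ZMod n) := by push_cast; ring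
      rwa [hc]
    · have hm1 : 1 ≤ m := by omega
      have ihm := ih hm1 (by omega) i
      have hb : D (i + ((2 * m : ℕ) : ZMod n)) (i + ((2 * (m + 1) : ℕ) : ZMod n)) := by
        have := hall (i + ((2 * m : ℕ) : ZMod n))
        have he : i + ((2 * (m + 1) : ℕ) : ZMod n) = i + ((2 * m : ℕ) : ZMod n) + 2 := by
          push_cast; ring
        rwa [he]
      exact tri hsimple hca ihm hb
        (cover2 h9 hcover (d := 2 * (m + 1)) (by omega) (by omega) i)
        (shiftNe h9 (by omega) (by omega) i)
        (addNe h9 (a := 2 * m) (b := 2 * (m + 1)) (by omega) (by omega) (by omega) i)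
        (shiftNe h9 (by omega) (by omega) i)

lemma caseA {D : ZMod n → ZMod n → Prop} (hn : Odd n) (h9 : 9 ≤ n)
    (hcover : ∀ i j : ZMod n, i ≠ j → j ≠ i + 1 → i ≠ j + 1 → D i j ∨ D j i)
    (hsimple : ∀ i j, ¬ (D i j ∧ D j i))
    (hca : ∀ K : Finset (ZMod n), K.Nonempty →
      (∀ u ∈ K, ∀ v ∈ K, u ≠ v → D u v ∨ D v u) →
      ∃ v ∈ K, ∀ u ∈ K, u ≠ v → D u v)
    (hall : ∀ i, D i (i + 2)) : False := by
  obtain ⟨m, hm⟩ := hn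
  -- D (j+3) j for all j
  have hmain : ∀ j : ZMod n, D (j + 3) j := by
    intro j
    have h1 := chainLem h9 hcover hsimple hca hall (m - 1) (by omega) (by omega) (j + 3)
    have hcast : ((2 * (m - 1) : ℕ) : ZMod n) = -3 := by
      have hadd : ((2 * (m - 1) : ℕ) : ZMod n) + ((3 : ℕ) : ZMod n) = ((n : ℕ) : ZMod n) := by
        rw [← Nat.cast_add]
        congr 1
        omega
      rw [ZMod.natCast_self] at hadd
      have h3 : ((3 : ℕ) : ZMod n) = (3 : ZMod n) := by push_cast; ring
      rw [h3] at hadd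
      linear_combination hadd
    rw [hcast] at h1
    have he : j + 3 + (-3 : ZMod n) = j := by ring
    rwa [he] at h1
  -- contradiction on the triangle {0, 3, 6}
  have h6 : D (0 : ZMod n) ((6 : ℕ) : ZMod n) := by
    have := chainLem h9 hcover hsimple hca hall 3 (by omega) (by omega) (0 : ZMod n)
    have he : (0 : ZMod n) + ((2 * 3 : ℕ) : ZMod n) = ((6 : ℕ) : ZMod n) := by
      push_cast; ring
    rwa [he] at this
  have h63 : D ((6 : ℕ) : ZMod n) ((3 : ℕ) : ZMod n) := by
    have := hmain ((3 : ℕ) : ZMod n)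
    have he : ((3 : ℕ) : ZMod n) + 3 = ((6 : ℕ) : ZMod n) := by push_cast; ring
    rwa [he] at this
  have h30 : D ((3 : ℕ) : ZMod n) (0 : ZMod n) := by
    have := hmain (0 : ZMod n)
    have he : (0 : ZMod n) + 3 = ((3 : ℕ) : ZMod n) := by push_cast; ring
    rwa [he] at this
  have hac : D ((6 : ℕ) : ZMod n) (0 : ZMod n) ∨ D (0 : ZMod n) ((6 : ℕ) : ZMod n) := by
    have := cover2 h9 hcover (d := 6) (by omega) (by omega) (0 : ZMod n)
    have he : (0 : ZMod n) + ((6 : ℕ) : ZMod n) = ((6 : ℕ) : ZMod n) := by ring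
    rw [he] at this
    exact this.symm
  have n63 : ((6 : ℕ) : ZMod n) ≠ ((3 : ℕ) : ZMod n) :=
    castNe h9 (by omega) (by omega) (by omega)
  have n30 : ((3 : ℕ) : ZMod n) ≠ (0 : ZMod n) := by
    have := castNe h9 (a := 3) (b := 0) (by omega) (by omega) (by omega)
    simpa using this
  have n60 : ((6 : ℕ) : ZMod n) ≠ (0 : ZMod n) := by
    have := castNe h9 (a := 6) (b := 0) (by omega) (by omega) (by omega)
    simpa using this
  have h60 : D ((6 : ℕ) : ZMod n) (0 : ZMod n) :=
    tri hsimple hca h63 h30 hac n63 n30 n60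
  exact hsimple _ _ ⟨h6, h60⟩

end Aux

/-- first step in the proof of Proposition 3 of the paper.
Let `n ≥ 9` be odd and let `D` be a simple clique-acyclic orientation of the anti-hole
on `n` vertices (vertex set `ZMod n`, `i` adjacent to `j` iff `i ≠ j` and `i, j` are
not consecutive modulo `n`; each edge oriented in exactly one direction; every nonempty
clique has a vertex receiving an arc from every other vertex of the clique). Then there
is an index `i` such that both `(i - 2, i)` and `(i + 2, i)` are arcs of `D`. -/
theorem stmt17 (n : ℕ) (hn : Odd n) (h9 : 9 ≤ n)
    (D : ZMod n → ZMod n → Prop)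
    (hsub : ∀ i j, D i j → i ≠ j ∧ j ≠ i + 1 ∧ i ≠ j + 1)
    (hcover : ∀ i j : ZMod n, i ≠ j → j ≠ i + 1 → i ≠ j + 1 → D i j ∨ D j i)
    (hsimple : ∀ i j, ¬ (D i j ∧ D j i))
    (hca : ∀ K : Finset (ZMod n), K.Nonempty →
      (∀ u ∈ K, ∀ v ∈ K, u ≠ v → D u v ∨ D v u) →
      ∃ v ∈ K, ∀ u ∈ K, u ≠ v → D u v) :
    ∃ i : ZMod n, D (i - 2) i ∧ D (i + 2) i := by
  by_contra hcon
  push_neg at hcon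
  obtain ⟨m, hm⟩ := hn
  have hn : Odd n := ⟨m, hm⟩
  haveI : NeZero n := ⟨by omega⟩
  have hedge : ∀ i : ZMod n, D i (i + 2) ∨ D (i + 2) i := by
    intro i
    have := cover2 h9 hcover (d := 2) (by omega) (by omega) i
    have he : i + ((2 : ℕ) : ZMod n) = i + 2 := by push_cast; ring
    rwa [he] at this
  -- Step: a forward arc forces the next forward arc
  have hstep : ∀ i : ZMod n, D i (i + 2) → D (i + 2) (i + 2 + 2) := by
    intro i h
    have h2 : D ((i + 2) - 2) (i + 2) := by
      have he : (i + 2) - 2 = i := by ring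
      rwa [he]
    have hnot := hcon (i + 2) h2
    rcases hedge (i + 2) with h' | h'
    · exact h'
    · exact absurd h' hnot
  by_cases hE : ∃ i₀ : ZMod n, D i₀ (i₀ + 2)
  · -- all arcs forward
    obtain ⟨i₀, hi₀⟩ := hE
    have hstepk : ∀ k : ℕ, ∀ i : ZMod n, D i (i + 2) →
        D (i + ((2 * k : ℕ) : ZMod n)) (i + ((2 * k : ℕ) : ZMod n) + 2) := by
      intro k
      induction k with
      | zero => intro i h; simpa using h
      | succ m ih =>
        intro i h
        have := hstep _ (ih i h)
        have he : i + ((2 * (m + 1) : ℕ) : ZMod n) = i + ((2 * m : ℕ) : ZMod n) + 2 := by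
          push_cast; ring
        rw [he]
        exact this
    have hstep1 : ∀ i : ZMod n, D i (i + 2) → D (i + 1) (i + 1 + 2) := by
      intro i h
      have hc : ((2 * ((n + 1) / 2) : ℕ) : ZMod n) = 1 := by
        have h1 : (2 * ((n + 1) / 2) : ℕ) = n + 1 := by omega
        rw [h1]
        push_cast [ZMod.natCast_self]
        ring
      have := hstepk ((n + 1) / 2) i h
      rwa [hc] at this
    have hAllk : ∀ k : ℕ, D (i₀ + (k : ZMod n)) (i₀ + (k : ZMod n) + 2) := by
      intro k
      induction k with
      | zero => simpa using hi₀
      | succ m ih =>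
        have := hstep1 _ ih
        have he : i₀ + ((m + 1 : ℕ) : ZMod n) = i₀ + ((m : ℕ) : ZMod n) + 1 := by
          push_cast; ring
        rw [he]
        exact this
    have hall : ∀ i : ZMod n, D i (i + 2) := by
      intro j
      have hk : (((j - i₀).val : ℕ) : ZMod n) = j - i₀ := ZMod.natCast_rightInverse _
      set k := (j - i₀).val with hkdef
      have hj : i₀ + (k : ZMod n) = j := by rw [hk]; ring
      have := hAllk k
      rwa [hj] at this
    exact absurd (caseA hn h9 hcover hsimple hca hall) id
  · -- all arcs backward; apply caseA to the reflected digraph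
    push_neg at hE
    have hback : ∀ i : ZMod n, D (i + 2) i := by
      intro i
      rcases hedge i with h | h
      · exact absurd h (hE i)
      · exact h
    set D' : ZMod n → ZMod n → Prop := fun a b => D (-a) (-b) with hD'
    have hcover' : ∀ i j : ZMod n, i ≠ j → j ≠ i + 1 → i ≠ j + 1 → D' i j ∨ D' j i := by
      intro i j h1 h2 h3
      apply hcover (-i) (-j)
      · intro h; exact h1 (neg_injective h)
      · intro h; apply h3; linear_combination h
      · intro h; apply h2; linear_combination h
    have hsimple' : ∀ i j, ¬ (D' i j ∧ D' j i) := fun i j h => hsimple (-i) (-j) h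
    have hca' : ∀ K : Finset (ZMod n), K.Nonempty →
        (∀ u ∈ K, ∀ v ∈ K, u ≠ v → D' u v ∨ D' v u) →
        ∃ v ∈ K, ∀ u ∈ K, u ≠ v → D' u v := by
      intro K hK hpair
      have hpair' : ∀ u ∈ K.image (fun x => -x), ∀ w ∈ K.image (fun x => -x),
          u ≠ w → D u w ∨ D w u := by
        intro u hu w hw huw
        obtain ⟨a, ha, rfl⟩ := Finset.mem_image.mp hu
        obtain ⟨b, hb, rfl⟩ := Finset.mem_image.mp hw
        exact hpair a ha b hb (fun h => huw (by rw [h]))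
      obtain ⟨v, hv, hs⟩ := hca (K.image (fun x => -x)) (hK.image _) hpair'
      obtain ⟨b, hb, rfl⟩ := Finset.mem_image.mp hv
      refine ⟨b, hb, ?_⟩
      intro a ha hab
      exact hs (-a) (Finset.mem_image_of_mem _ ha) (fun h => hab (neg_injective h))
    have hall' : ∀ i : ZMod n, D' i (i + 2) := by
      intro i
      show D (-i) (-(i + 2))
      have := hback (-i - 2)
      have h1 : -i - 2 + 2 = -i := by ring
      have h2 : -(i + 2) = -i - 2 := by ring
      rw [h1] at this
      rwa [h2]
    exact absurd (caseA hn h9 hcover' hsimple' hca' hall') id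
end
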